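/- arXiv:1707.06213 — 7 statements merged into one kernel-verified Lean document; each statement's English description precedes it below -/
import Mathlib

section
/- Let d ≥ 1, p ≥ 1, a, b > 0, and let η : [0,∞) → [0,∞) be nonincreasing with η(t) ≥ a for all t ∈ [0,b]. Let Ω ⊆ ℝ^d be a Borel set and μ a probability measure on Ω whose density ρ with respect to Lebesgue measure satisfies ρ(w) ≥ ρ_min > 0 for a.e. w ∈ Ω. Let n ≥ 1, x : Fin n → ℝ^d, ε > 0, and let T : Ω → ℝ^d be Borel measurable with pushforward μ ∘ T⁻¹ equal to the empirical measure μ_n and with ‖T(w) − w‖ ≤ bε/4 for μ-a.e. w. If k ∈ Fin n is such that the closed ball B̄(x k, bε/4) is contained in Ω, then for every f : Fin n → ℝ one has (osc_{bε/2}(f)(k))^p ≤ (2^{p+1}·4^d / (a·ρ_min·ω_d·b^d)) · ε^p · n · E_n(f), where ω_d denotes the Lebesgue measure of the unit ball of ℝ^d. -/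
open MeasureTheory Metric Set
open scoped ENNReal BigOperators

/-- The graph `p`-Dirichlet energy
`E_n(f) = (1/(ε^{p+d} n²)) Σ_{i,j} η(‖x i − x j‖/ε) |f i − f j|^p`. -/
noncomputable def graphEnergy (d n : ℕ) (x : Fin n → EuclideanSpace ℝ (Fin d))
    (ε : ℝ) (η : ℝ → ℝ) (p : ℝ) (f : Fin n → ℝ) : ℝ :=
  (1 / (ε ^ (p + (d : ℝ)) * (n : ℝ) ^ 2)) *
    ∑ i, ∑ j, η (‖x i - x j‖ / ε) * |f i - f j| ^ p

/-- The oscillation of `f` at the vertex `k` over radius `r`: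
`osc_r(f)(k) = max{f j : ‖x j − x k‖ ≤ r} − min{f j : ‖x j − x k‖ ≤ r}`. -/
noncomputable def oscAt (d n : ℕ) (x : Fin n → EuclideanSpace ℝ (Fin d))
    (f : Fin n → ℝ) (r : ℝ) (k : Fin n) : ℝ :=
  sSup (f '' {j | ‖x j - x k‖ ≤ r}) - sInf (f '' {j | ‖x j - x k‖ ≤ r})

/-- The empirical measure `μ_n = (1/n) Σ_i δ_{x i}`. -/
noncomputable def empiricalMeasure (d n : ℕ) (x : Fin n → EuclideanSpace ℝ (Fin d)) :
    Measure (EuclideanSpace ℝ (Fin d)) :=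
  ((n : ℝ≥0∞))⁻¹ • ∑ i, Measure.dirac (x i)

/-!
Let `i₀, j₀` realise the maximum and minimum of `f` on the ball `B = B̄(x k, bε/2)`. For every
`j ∈ B` the triangle inequality gives `osc/2 ≤ max(|f i₀ - f j|, |f j - f j₀|)`, and all three
points are within `bε` of each other, so the kernel weights are at least `a`. Summing over
`j ∈ B` bounds `#B · a · osc^p` by `2^{p+1}` times the unnormalised energy. On the other hand the
transport map moves `B̄(x k, bε/4) ⊆ Ω` into `B`, so `#B / n = μ_n(B) ≥ μ(B̄(x k, bε/4)) ≥
ρ_min ω_d (bε/4)^d`.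
-/

open MeasureTheory Metric Set Finset
open scoped ENNReal

theorem abs_add_div_two_rpow_le {p : ℝ} (hp : 0 ≤ p) (u v : ℝ) :
    (|u + v| / 2) ^ p ≤ |u| ^ p + |v| ^ p := by
  have hmax : |u + v| / 2 ≤ max |u| |v| := by
    linarith [abs_add_le u v, le_max_left |u| |v|, le_max_right |u| |v|]
  calc (|u + v| / 2) ^ p ≤ max |u| |v| ^ p := Real.rpow_le_rpow (by positivity) hmax hp
    _ ≤ |u| ^ p + |v| ^ p := by
      rcases max_choice |u| |v| with h | h <;> rw [h]
      · exact le_add_of_nonneg_right (by positivity)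
      · exact le_add_of_nonneg_left (by positivity)

theorem card_mul_half_rpow_le_sum_sum {ι : Type*} [Fintype ι] {w : ι → ι → ℝ} {f : ι → ℝ}
    {s : Finset ι} {a p : ℝ} (hp : 0 ≤ p) (ha : 0 ≤ a) (hw : ∀ i j, 0 ≤ w i j)
    (hws : ∀ i ∈ s, ∀ j ∈ s, a ≤ w i j) {i₀ j₀ : ι} (hi₀ : i₀ ∈ s) (hj₀ : j₀ ∈ s) :
    #s * a * (|f i₀ - f j₀| / 2) ^ p ≤ 2 * ∑ i, ∑ j, w i j * |f i - f j| ^ p := by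
  set A := ∑ i, ∑ j, w i j * |f i - f j| ^ p
  have hterm : ∀ i j, 0 ≤ w i j * |f i - f j| ^ p := fun i j => mul_nonneg (hw i j) (by positivity)
  have hrow : ∑ j ∈ s, w i₀ j * |f i₀ - f j| ^ p ≤ A :=
    (sum_le_sum_of_subset_of_nonneg (subset_univ s) fun j _ _ => hterm i₀ j).trans
      (single_le_sum (f := fun i => ∑ j, w i j * |f i - f j| ^ p)
        (fun i _ => sum_nonneg fun j _ => hterm i j) (mem_univ i₀))
  have hcol : ∑ j ∈ s, w j j₀ * |f j - f j₀| ^ p ≤ A :=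
    (sum_le_sum_of_subset_of_nonneg (subset_univ s) fun j _ _ => hterm j j₀).trans
      (sum_le_sum fun i _ => single_le_sum (f := fun j => w i j * |f i - f j| ^ p)
        (fun j _ => hterm i j) (mem_univ j₀))
  have hpoint : ∀ j ∈ s, a * (|f i₀ - f j₀| / 2) ^ p ≤
      w i₀ j * |f i₀ - f j| ^ p + w j j₀ * |f j - f j₀| ^ p := by
    intro j hj
    calc a * (|f i₀ - f j₀| / 2) ^ p ≤ a * (|f i₀ - f j| ^ p + |f j - f j₀| ^ p) := by
          gcongr
          simpa using abs_add_div_two_rpow_le hp (f i₀ - f j) (f j - f j₀)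
      _ ≤ w i₀ j * |f i₀ - f j| ^ p + w j j₀ * |f j - f j₀| ^ p := by
          rw [mul_add]
          gcongr
          exacts [hws _ hi₀ _ hj, hws _ hj _ hj₀]
  calc #s * a * (|f i₀ - f j₀| / 2) ^ p = ∑ _j ∈ s, a * (|f i₀ - f j₀| / 2) ^ p := by
        rw [sum_const, nsmul_eq_mul, mul_assoc]
    _ ≤ ∑ j ∈ s, (w i₀ j * |f i₀ - f j| ^ p + w j j₀ * |f j - f j₀| ^ p) := sum_le_sum hpoint
    _ ≤ 2 * A := by rw [sum_add_distrib]; linarith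

section Graph

variable {d n : ℕ} (x : Fin n → EuclideanSpace ℝ (Fin d))

theorem exists_oscAt_eq_abs_sub (f : Fin n → ℝ) {r : ℝ} (hr : 0 ≤ r) (k : Fin n) :
    ∃ i j, ‖x i - x k‖ ≤ r ∧ ‖x j - x k‖ ≤ r ∧ oscAt d n x f r k = |f i - f j| := by
  set S := {j | ‖x j - x k‖ ≤ r}
  have hne : (f '' S).Nonempty := ⟨f k, k, by simpa [S] using hr, rfl⟩
  have hfin : (f '' S).Finite := (toFinite S).image f
  obtain ⟨i, hi, hfi⟩ := hne.csSup_mem hfin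
  obtain ⟨j, hj, hfj⟩ := hne.csInf_mem hfin
  have hji : f j ≤ f i := hfj ▸ csInf_le hfin.bddBelow ⟨i, hi, rfl⟩
  refine ⟨i, j, hi, hj, ?_⟩
  rw [oscAt, ← hfi, ← hfj, abs_of_nonneg (sub_nonneg.2 hji)]

theorem oscAt_nonneg (f : Fin n → ℝ) {r : ℝ} (hr : 0 ≤ r) (k : Fin n) :
    0 ≤ oscAt d n x f r k := by
  obtain ⟨i, j, -, -, h⟩ := exists_oscAt_eq_abs_sub x f hr k
  exact h ▸ abs_nonneg _

theorem card_mul_oscAt_rpow_le (f : Fin n → ℝ) (w : Fin n → Fin n → ℝ) {a p r : ℝ}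
    (hp : 0 ≤ p) (ha : 0 ≤ a) (hr : 0 ≤ r) (k : Fin n) (hw : ∀ i j, 0 ≤ w i j)
    (hwa : ∀ i j, ‖x i - x k‖ ≤ r → ‖x j - x k‖ ≤ r → a ≤ w i j) :
    #{j | ‖x j - x k‖ ≤ r} * a * oscAt d n x f r k ^ p ≤
      2 ^ (p + 1) * ∑ i, ∑ j, w i j * |f i - f j| ^ p := by
  obtain ⟨i₀, j₀, hi₀, hj₀, hosc⟩ := exists_oscAt_eq_abs_sub x f hr k
  have h := card_mul_half_rpow_le_sum_sum (s := {j | ‖x j - x k‖ ≤ r}) (f := f) hp ha hw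
    (fun i hi j hj => hwa i j (by simpa using hi) (by simpa using hj))
    (by simpa using hi₀) (by simpa using hj₀)
  have h2p : (0 : ℝ) < 2 ^ p := by positivity
  rw [Real.div_rpow (abs_nonneg _) zero_le_two, ← hosc, ← mul_div_assoc, div_le_iff₀ h2p] at h
  rw [Real.rpow_add two_pos, Real.rpow_one]
  linarith

theorem empiricalMeasure_closedBall (c : EuclideanSpace ℝ (Fin d)) (r : ℝ) :
    empiricalMeasure d n x (closedBall c r) = (n : ℝ≥0∞)⁻¹ * #{j | ‖x j - c‖ ≤ r} := by
  classical
  rw [empiricalMeasure, Measure.smul_apply, smul_eq_mul, Measure.finsetSum_apply]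
  simp only [Measure.dirac_apply' _ measurableSet_closedBall, indicator_apply, Pi.one_apply,
    mem_closedBall, dist_eq_norm, sum_boole]

end Graph

theorem ofReal_mul_le_withDensity_apply {α : Type*} [MeasurableSpace α] {ν : Measure α}
    {Ω B : Set α} {ρ : α → ℝ} {c : ℝ} (hρ : ∀ᵐ w ∂ν.restrict Ω, c ≤ ρ w)
    (hB : MeasurableSet B) (hBΩ : B ⊆ Ω) :
    ENNReal.ofReal c * ν B ≤ (ν.restrict Ω).withDensity (fun w => ENNReal.ofReal (ρ w)) B := by
  rw [withDensity_apply _ hB, Measure.restrict_restrict_of_subset hBΩ, ← setLIntegral_const]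
  exact lintegral_mono_ae <| (ae_restrict_of_ae_restrict_of_subset hBΩ hρ).mono
    fun w hw => ENNReal.ofReal_le_ofReal hw

theorem measure_closedBall_le_map_closedBall {α : Type*} [PseudoMetricSpace α]
    [MeasurableSpace α] [OpensMeasurableSpace α] {μ : Measure α} {T : α → α} (hT : Measurable T)
    {s : ℝ} (hTs : ∀ᵐ w ∂μ, dist (T w) w ≤ s) (c : α) (r : ℝ) :
    μ (closedBall c r) ≤ μ.map T (closedBall c (r + s)) := by
  rw [Measure.map_apply hT measurableSet_closedBall]
  refine measure_mono_ae (hTs.mono fun w hw (hwc : dist w c ≤ r) => ?_)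
  show dist (T w) c ≤ r + s
  linarith [dist_triangle (T w) w c]

theorem mul_volume_closedBall_le_card {d n : ℕ} (hn : 0 < n)
    {x : Fin n → EuclideanSpace ℝ (Fin d)} {Ω : Set (EuclideanSpace ℝ (Fin d))}
    {ρ : EuclideanSpace ℝ (Fin d) → ℝ} {ρmin : ℝ} (hρmin : 0 ≤ ρmin)
    (hρ : ∀ᵐ w ∂(volume.restrict Ω), ρmin ≤ ρ w)
    {T : EuclideanSpace ℝ (Fin d) → EuclideanSpace ℝ (Fin d)} (hT : Measurable T)
    (hpush : ((volume.restrict Ω).withDensity fun w => ENNReal.ofReal (ρ w)).map T =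
      empiricalMeasure d n x)
    {s : ℝ} (hclose : ∀ᵐ w ∂(volume.restrict Ω).withDensity (fun w => ENNReal.ofReal (ρ w)),
      ‖T w - w‖ ≤ s)
    {c : EuclideanSpace ℝ (Fin d)} {r : ℝ} (hr : 0 ≤ r) (hc : closedBall c r ⊆ Ω) :
    n * ρmin * (r ^ d * (volume (closedBall (0 : EuclideanSpace ℝ (Fin d)) 1)).toReal) ≤
      #{j | ‖x j - c‖ ≤ r + s} := by
  set μ := (volume.restrict Ω).withDensity fun w => ENNReal.ofReal (ρ w)
  have hle : ENNReal.ofReal ρmin *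
      (ENNReal.ofReal (r ^ d) * volume (closedBall (0 : EuclideanSpace ℝ (Fin d)) 1)) ≤
      (n : ℝ≥0∞)⁻¹ * #{j | ‖x j - c‖ ≤ r + s} :=
    calc _ = ENNReal.ofReal ρmin * volume (closedBall c r) := by
          rw [Measure.addHaar_closedBall' volume c hr, finrank_euclideanSpace_fin]
      _ ≤ μ (closedBall c r) := ofReal_mul_le_withDensity_apply hρ measurableSet_closedBall hc
      _ ≤ μ.map T (closedBall c (r + s)) := measure_closedBall_le_map_closedBall hT
          (hclose.mono fun w hw => by rwa [dist_eq_norm]) c r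
      _ = _ := by rw [hpush, empiricalMeasure_closedBall]
  have hfin : (n : ℝ≥0∞)⁻¹ * #{j | ‖x j - c‖ ≤ r + s} ≠ ⊤ :=
    ENNReal.mul_ne_top (by simpa using hn.ne') (ENNReal.natCast_ne_top _)
  have h := ENNReal.toReal_mono hfin hle
  rw [ENNReal.toReal_mul, ENNReal.toReal_mul, ENNReal.toReal_mul, ENNReal.toReal_inv,
    ENNReal.toReal_ofReal hρmin, ENNReal.toReal_ofReal (by positivity), ENNReal.toReal_natCast,
    ENNReal.toReal_natCast] at h
  have hn' : (0 : ℝ) < n := by exact_mod_cast hn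
  rwa [mul_assoc, ← le_div_iff₀' hn', div_eq_inv_mul]

theorem stmt0_general (d n : ℕ)
    (p a b ρmin ε : ℝ) (hp : 1 ≤ p) (ha : 0 < a) (hb : 0 < b) (hρmin : 0 < ρmin)
    (hε : 0 < ε)
    (η : ℝ → ℝ) (hηnonneg : ∀ t, 0 ≤ t → 0 ≤ η t)
    (hηa : ∀ t ∈ Set.Icc (0 : ℝ) b, a ≤ η t)
    (Ω : Set (EuclideanSpace ℝ (Fin d)))
    (ρ : EuclideanSpace ℝ (Fin d) → ℝ)
    (μ : Measure (EuclideanSpace ℝ (Fin d)))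
    (hμ : μ = (volume.restrict Ω).withDensity (fun w => ENNReal.ofReal (ρ w)))
    (hρ : ∀ᵐ w ∂(volume.restrict Ω), ρmin ≤ ρ w)
    (x : Fin n → EuclideanSpace ℝ (Fin d))
    (T : EuclideanSpace ℝ (Fin d) → EuclideanSpace ℝ (Fin d)) (hT : Measurable T)
    (hpush : μ.map T = empiricalMeasure d n x)
    (hclose : ∀ᵐ w ∂μ, ‖T w - w‖ ≤ b * ε / 4)
    (k : Fin n) (hk : closedBall (x k) (b * ε / 4) ⊆ Ω)
    (f : Fin n → ℝ) :
    oscAt d n x f (b * ε / 2) k ^ p ≤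
      (2 ^ (p + 1) * 4 ^ d /
          (a * ρmin * (volume (closedBall (0 : EuclideanSpace ℝ (Fin d)) 1)).toReal * b ^ d)) *
        ε ^ p * n * graphEnergy d n x ε η p f := by
  subst hμ
  have hr : 0 ≤ b * ε / 4 := by positivity
  have hcard := mul_volume_closedBall_le_card k.pos hρmin.le hρ hT hpush hclose hr hk
  rw [show b * ε / 4 + b * ε / 4 = b * ε / 2 by ring] at hcard
  have hosc := card_mul_oscAt_rpow_le x f (fun i j => η (‖x i - x j‖ / ε)) (p := p)
    (r := b * ε / 2) (by linarith) ha.le (by positivity) k (fun i j => hηnonneg _ (by positivity))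
    (fun i j hi hj => hηa _ ⟨by positivity, by
      rw [div_le_iff₀ hε]
      linarith [norm_sub_le_norm_sub_add_norm_sub (x i) (x k) (x j), norm_sub_rev (x k) (x j)]⟩)
  set ω := (volume (closedBall (0 : EuclideanSpace ℝ (Fin d)) 1)).toReal
  have hω : 0 < ω :=
    ENNReal.toReal_pos (measure_closedBall_pos _ _ one_pos).ne' measure_closedBall_lt_top.ne
  have hn : (0 : ℝ) < n := by exact_mod_cast k.pos
  set D := n * ρmin * ((b * ε / 4) ^ d * ω) with hD_def
  have hD : 0 < D := by positivity
  have hrhs : 2 ^ (p + 1) * 4 ^ d / (a * ρmin * ω * b ^ d) * ε ^ p * n *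
      graphEnergy d n x ε η p f =
      2 ^ (p + 1) * (∑ i, ∑ j, η (‖x i - x j‖ / ε) * |f i - f j| ^ p) / (a * D) := by
    rw [graphEnergy, Real.rpow_add hε, Real.rpow_natCast, hD_def, div_pow, mul_pow]
    field_simp
  rw [hrhs, le_div_iff₀ (by positivity)]
  have hosc₀ : 0 ≤ oscAt d n x f (b * ε / 2) k ^ p :=
    Real.rpow_nonneg (oscAt_nonneg x f (by positivity) k) p
  calc oscAt d n x f (b * ε / 2) k ^ p * (a * D)
      ≤ oscAt d n x f (b * ε / 2) k ^ p * (a * #{j | ‖x j - x k‖ ≤ b * ε / 2}) := by gcongr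
    _ = #{j | ‖x j - x k‖ ≤ b * ε / 2} * a * oscAt d n x f (b * ε / 2) k ^ p := by ring
    _ ≤ _ := hosc

theorem stmt0 (d n : ℕ) (hd : 1 ≤ d) (hn : 1 ≤ n)
    (p a b ρmin ε : ℝ) (hp : 1 ≤ p) (ha : 0 < a) (hb : 0 < b) (hρmin : 0 < ρmin)
    (hε : 0 < ε)
    (η : ℝ → ℝ) (hηnonneg : ∀ t, 0 ≤ t → 0 ≤ η t)
    (hηmono : AntitoneOn η (Set.Ici 0))
    (hηa : ∀ t ∈ Set.Icc (0 : ℝ) b, a ≤ η t)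
    (Ω : Set (EuclideanSpace ℝ (Fin d))) (hΩ : MeasurableSet Ω)
    (ρ : EuclideanSpace ℝ (Fin d) → ℝ)
    (μ : Measure (EuclideanSpace ℝ (Fin d)))
    (hμ : μ = (volume.restrict Ω).withDensity (fun w => ENNReal.ofReal (ρ w)))
    (hprob : IsProbabilityMeasure μ)
    (hρ : ∀ᵐ w ∂(volume.restrict Ω), ρmin ≤ ρ w)
    (x : Fin n → EuclideanSpace ℝ (Fin d))
    (T : EuclideanSpace ℝ (Fin d) → EuclideanSpace ℝ (Fin d)) (hT : Measurable T)
    (hpush : μ.map T = empiricalMeasure d n x)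
    (hclose : ∀ᵐ w ∂μ, ‖T w - w‖ ≤ b * ε / 4)
    (k : Fin n) (hk : closedBall (x k) (b * ε / 4) ⊆ Ω)
    (f : Fin n → ℝ) :
    oscAt d n x f (b * ε / 2) k ^ p ≤
      (2 ^ (p + 1) * 4 ^ d /
          (a * ρmin * (volume (closedBall (0 : EuclideanSpace ℝ (Fin d)) 1)).toReal * b ^ d)) *
        ε ^ p * n * graphEnergy d n x ε η p f :=
  stmt0_general d n p a b ρmin ε hp ha hb hρmin hε η hηnonneg hηa Ω ρ μ hμ hρ x T hT hpush hclose k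
    hk f
end

section
/- Let d ≥ 1, p ≥ 1, a, b > 0, and let η : [0,∞) → [0,∞) be nonincreasing with η(t) ≥ a for all t ∈ [0,b]. Let Ω ⊆ ℝ^d be a Borel set and μ a probability measure on Ω whose density with respect to Lebesgue measure satisfies ρ ≥ ρ_min > 0 a.e. on Ω. Let n ≥ 1, let x : Fin n → ℝ^d be injective with empirical measure μ_n, let ε > 0 and s ≥ 0 with ε̃ := ε − 2s/b > 0, and let T : Ω → ℝ^d be Borel measurable with pushforward μ ∘ T⁻¹ = μ_n and ‖T(w) − w‖ ≤ s for μ-a.e. w. Let f : Fin n → ℝ and let F : Ω → ℝ be measurable such that for μ-a.e. w there is i ∈ Fin n with T(w) = x i and F(w) = f i. Then ε̃^{-(p+d)} · ∫_Ω ∫_Ω a · 1{‖w − z‖ < b ε̃} · |F(w) − F(z)|^p dz dw ≤ (ε/ε̃)^{p+d} · ρ_min^{-2} · E_n(f); that is, the nonlocal p-Dirichlet energy of F over Ω at scale ε̃ with kernel profile a·1_{[0,b)} is at most (ε/ε̃)^{p+d} ρ_min^{-2} times the graph p-Dirichlet energy of f with kernel profile η. -/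
open MeasureTheory Metric Set
open scoped ENNReal BigOperators

/-!
If `‖w - z‖ < b εt` then, as `T` moves points by at most `s`, `‖T w - T z‖ ≤ b ε`, where
`η ≥ a`; since `F w = f i` when `T w = x i`, the nonlocal integrand at `(w, z)` is bounded by
the graph summand at `(T w, T z)`. The density bound gives `ρmin • vol|Ω ≤ μ`, so passing from
`vol|Ω` to `μ` in both variables costs `ρmin⁻²`, and since `μ` pushes forward to the empirical
measure under `T`, the double `μ`-integral of the graph summand is `n⁻² Σᵢ Σⱼ`. The comparison is
made with lower Lebesgue integrals, which need no integrability or measurability of `F`.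
-/

section
variable {α : Type*} [MeasurableSpace α] {μ : Measure α}

theorem ofReal_integral_le_lintegral_ofReal (f : α → ℝ) :
    ENNReal.ofReal (∫ a, f a ∂μ) ≤ ∫⁻ a, ENNReal.ofReal (f a) ∂μ := by
  by_cases hf : Integrable f μ
  · rw [integral_eq_lintegral_pos_part_sub_lintegral_neg_part hf]
    exact (ENNReal.ofReal_le_ofReal (sub_le_self _ ENNReal.toReal_nonneg)).trans
      ENNReal.ofReal_toReal_le
  · simp [integral_undef hf]

theorem mul_lintegral_le_of_smul_le {ν : Measure α} {c : ℝ≥0∞} (h : c • ν ≤ μ)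
    (f : α → ℝ≥0∞) : c * ∫⁻ a, f a ∂ν ≤ ∫⁻ a, f a ∂μ := by
  rw [← smul_eq_mul, ← lintegral_smul_measure]
  exact lintegral_mono' h le_rfl

theorem ofReal_sq_mul_integral_integral_le_of_smul_le {ν : Measure α} {c : ℝ} (hc : 0 ≤ c)
    (h : ENNReal.ofReal c • ν ≤ μ) (G : α → α → ℝ) :
    ENNReal.ofReal (c ^ 2 * ∫ w, ∫ z, G w z ∂ν ∂ν) ≤
      ∫⁻ w, ∫⁻ z, ENNReal.ofReal (G w z) ∂μ ∂μ := by
  set C := ENNReal.ofReal c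
  calc ENNReal.ofReal (c ^ 2 * ∫ w, ∫ z, G w z ∂ν ∂ν)
      ≤ C * (C * ∫⁻ w, ∫⁻ z, ENNReal.ofReal (G w z) ∂ν ∂ν) := by
        rw [ENNReal.ofReal_mul (by positivity), ENNReal.ofReal_pow hc, pow_two, mul_assoc]
        grw [ofReal_integral_le_lintegral_ofReal]
        gcongr with w
        exact ofReal_integral_le_lintegral_ofReal _
    _ ≤ C * ∫⁻ w, ∫⁻ z, ENNReal.ofReal (G w z) ∂ν ∂μ := by
        gcongr
        exact mul_lintegral_le_of_smul_le h _
    _ ≤ ∫⁻ w, C * ∫⁻ z, ENNReal.ofReal (G w z) ∂ν ∂μ := lintegral_const_mul_le _ _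
    _ ≤ ∫⁻ w, ∫⁻ z, ENNReal.ofReal (G w z) ∂μ ∂μ := by
        gcongr with w
        exact mul_lintegral_le_of_smul_le h _

theorem smul_le_withDensity_of_ae_le {g : α → ℝ≥0∞} {c : ℝ≥0∞} (h : ∀ᵐ a ∂μ, c ≤ g a) :
    c • μ ≤ μ.withDensity g := by
  rw [← withDensity_const]
  exact withDensity_mono h

end

section
variable {d n : ℕ} {x : Fin n → EuclideanSpace ℝ (Fin d)}

theorem aemeasurable_empiricalMeasure {β : Type*} [MeasurableSpace β]
    (h : EuclideanSpace ℝ (Fin d) → β) : AEMeasurable h (empiricalMeasure d n x) := by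
  rw [empiricalMeasure, ← Measure.sum_fintype]
  exact (AEMeasurable.sum_measure fun _ => aemeasurable_dirac).smul_measure _

theorem lintegral_empiricalMeasure (h : EuclideanSpace ℝ (Fin d) → ℝ≥0∞) :
    ∫⁻ u, h u ∂(empiricalMeasure d n x) = (n : ℝ≥0∞)⁻¹ * ∑ i, h (x i) := by
  simp [empiricalMeasure]

variable {α : Type*} [MeasurableSpace α] {μ : Measure α} {T : α → EuclideanSpace ℝ (Fin d)}

theorem lintegral_comp_of_map_eq_empiricalMeasure (hT : AEMeasurable T μ)
    (hpush : μ.map T = empiricalMeasure d n x) (h : EuclideanSpace ℝ (Fin d) → ℝ≥0∞) :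
    ∫⁻ w, h (T w) ∂μ = (n : ℝ≥0∞)⁻¹ * ∑ i, h (x i) := by
  rw [← lintegral_map' (hpush ▸ aemeasurable_empiricalMeasure h) hT, hpush,
    lintegral_empiricalMeasure]

theorem lintegral_lintegral_comp_of_map_eq_empiricalMeasure (hT : AEMeasurable T μ)
    (hpush : μ.map T = empiricalMeasure d n x)
    (K : EuclideanSpace ℝ (Fin d) → EuclideanSpace ℝ (Fin d) → ℝ≥0∞) :
    ∫⁻ w, ∫⁻ z, K (T w) (T z) ∂μ ∂μ = (n : ℝ≥0∞)⁻¹ ^ 2 * ∑ i, ∑ j, K (x i) (x j) := by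
  simp_rw [lintegral_comp_of_map_eq_empiricalMeasure hT hpush (K _)]
  rw [lintegral_comp_of_map_eq_empiricalMeasure hT hpush
    (fun u => (n : ℝ≥0∞)⁻¹ * ∑ j, K u (x j))]
  simp only [pow_two, mul_assoc, Finset.mul_sum]

theorem lintegral_lintegral_ofReal_comp_of_map_eq_empiricalMeasure (hT : AEMeasurable T μ)
    (hpush : μ.map T = empiricalMeasure d n x)
    {K : EuclideanSpace ℝ (Fin d) → EuclideanSpace ℝ (Fin d) → ℝ}
    (hK : ∀ i j, 0 ≤ K (x i) (x j)) :
    ∫⁻ w, ∫⁻ z, ENNReal.ofReal (K (T w) (T z)) ∂μ ∂μ =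
      ENNReal.ofReal ((n : ℝ)⁻¹ ^ 2 * ∑ i, ∑ j, K (x i) (x j)) := by
  rw [lintegral_lintegral_comp_of_map_eq_empiricalMeasure hT hpush
    fun u v => ENNReal.ofReal (K u v)]
  rcases n.eq_zero_or_pos with rfl | hn
  · simp
  rw [ENNReal.ofReal_mul (by positivity), ENNReal.ofReal_pow (by positivity),
    ENNReal.ofReal_inv_of_pos (Nat.cast_pos.mpr hn), ENNReal.ofReal_natCast,
    ENNReal.ofReal_sum_of_nonneg fun i _ => Finset.sum_nonneg fun j _ => hK i j]
  simp only [ENNReal.ofReal_sum_of_nonneg fun j _ => hK _ j]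

end

section
variable {E : Type*} [SeminormedAddCommGroup E] {n : ℕ} {x : Fin n → E} {ε p : ℝ} {η : ℝ → ℝ}
  {f : Fin n → ℝ}

/-- The summand of `graphEnergy` as a function of two arbitrary points, so that it can be
evaluated at `T w`, `T z`. -/
noncomputable def graphKernel (x : Fin n → E) (ε : ℝ) (η : ℝ → ℝ) (p : ℝ) (f : Fin n → ℝ)
    (u v : E) : ℝ :=
  η (‖u - v‖ / ε) * |Function.extend x f 0 u - Function.extend x f 0 v| ^ p

theorem graphKernel_apply (hx : Function.Injective x) (i j : Fin n) :
    graphKernel x ε η p f (x i) (x j) = η (‖x i - x j‖ / ε) * |f i - f j| ^ p := by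
  rw [graphKernel, hx.extend_apply, hx.extend_apply]

theorem graphKernel_nonneg (hε : 0 ≤ ε) (hηnonneg : ∀ t, 0 ≤ t → 0 ≤ η t) (u v : E) :
    0 ≤ graphKernel x ε η p f u v :=
  mul_nonneg (hηnonneg _ (by positivity)) (by positivity)

end

theorem ite_mul_le_mul_of_norm_sub_le {E : Type*} [SeminormedAddCommGroup E] {η : ℝ → ℝ}
    {a b ε r s t : ℝ} (hε : 0 < ε) (hηnonneg : ∀ t, 0 ≤ t → 0 ≤ η t)
    (hηa : ∀ t ∈ Set.Icc (0 : ℝ) b, a ≤ η t) (hr : r + 2 * s ≤ b * ε) {u v w z : E}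
    (hu : ‖u - w‖ ≤ s) (hv : ‖v - z‖ ≤ s) (ht : 0 ≤ t) :
    (if ‖w - z‖ < r then a else 0) * t ≤ η (‖u - v‖ / ε) * t := by
  split_ifs with hwz
  · have huv : ‖u - v‖ ≤ ‖u - w‖ + ‖w - z‖ + ‖v - z‖ := by
      grw [norm_sub_le_norm_sub_add_norm_sub u w v, norm_sub_le_norm_sub_add_norm_sub w z v,
        norm_sub_rev z v, add_assoc]
    gcongr
    exact hηa _ ⟨by positivity, by rw [div_le_iff₀ hε]; linarith⟩
  · rw [zero_mul]
    exact mul_nonneg (hηnonneg _ (by positivity)) ht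

theorem ae_ae_ite_mul_le_graphKernel {E : Type*} [NormedAddCommGroup E] [MeasurableSpace E]
    {μ : Measure E} {n : ℕ} {x : Fin n → E} (hx : Function.Injective x) {η : ℝ → ℝ}
    {a b ε r s p : ℝ} (hε : 0 < ε) (hηnonneg : ∀ t, 0 ≤ t → 0 ≤ η t)
    (hηa : ∀ t ∈ Set.Icc (0 : ℝ) b, a ≤ η t) (hr : r + 2 * s ≤ b * ε) {T : E → E}
    (hclose : ∀ᵐ w ∂μ, ‖T w - w‖ ≤ s) {f : Fin n → ℝ} {F : E → ℝ}
    (hFf : ∀ᵐ w ∂μ, ∃ i : Fin n, T w = x i ∧ F w = f i) :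
    ∀ᵐ w ∂μ, ∀ᵐ z ∂μ,
      (if ‖w - z‖ < r then a else 0) * |F w - F z| ^ p ≤ graphKernel x ε η p f (T w) (T z) := by
  filter_upwards [hclose, hFf] with w hw ⟨i, hTw, hFw⟩
  filter_upwards [hclose, hFf] with z hz ⟨j, hTz, hFz⟩
  rw [hTw] at hw ⊢
  rw [hTz] at hz ⊢
  rw [hFw, hFz, graphKernel_apply hx]
  exact ite_mul_le_mul_of_norm_sub_le hε hηnonneg hηa hr hw hz (by positivity)

theorem stmt4_general (d n : ℕ)
    (p a b ρmin ε s εt : ℝ) (hb : 0 < b)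
    (hρmin : 0 < ρmin) (hε : 0 < ε)
    (hεt : εt = ε - 2 * s / b) (hεtpos : 0 < εt)
    (η : ℝ → ℝ) (hηnonneg : ∀ t, 0 ≤ t → 0 ≤ η t)
    (hηa : ∀ t ∈ Set.Icc (0 : ℝ) b, a ≤ η t)
    (Ω : Set (EuclideanSpace ℝ (Fin d)))
    (ρ : EuclideanSpace ℝ (Fin d) → ℝ)
    (μ : Measure (EuclideanSpace ℝ (Fin d)))
    (hμ : μ = (volume.restrict Ω).withDensity (fun w => ENNReal.ofReal (ρ w)))
    (hρ : ∀ᵐ w ∂(volume.restrict Ω), ρmin ≤ ρ w)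
    (x : Fin n → EuclideanSpace ℝ (Fin d)) (hxinj : Function.Injective x)
    (T : EuclideanSpace ℝ (Fin d) → EuclideanSpace ℝ (Fin d)) (hT : Measurable T)
    (hpush : μ.map T = empiricalMeasure d n x)
    (hclose : ∀ᵐ w ∂μ, ‖T w - w‖ ≤ s)
    (f : Fin n → ℝ)
    (F : EuclideanSpace ℝ (Fin d) → ℝ)
    (hFf : ∀ᵐ w ∂μ, ∃ i : Fin n, T w = x i ∧ F w = f i) :
    εt ^ (-(p + (d : ℝ))) *
        ∫ w in Ω, ∫ z in Ω,
          (if ‖w - z‖ < b * εt then a else 0) * |F w - F z| ^ p ≤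
      (ε / εt) ^ (p + (d : ℝ)) / ρmin ^ 2 * graphEnergy d n x ε η p f := by
  have hscale : b * εt + 2 * s ≤ b * ε := by
    rw [hεt]; field_simp; linarith
  have hkernel := ae_ae_ite_mul_le_graphKernel (p := p) hxinj hε hηnonneg hηa hscale hclose hFf
  have hdensity : ENNReal.ofReal ρmin • volume.restrict Ω ≤ μ :=
    hμ ▸ smul_le_withDensity_of_ae_le (hρ.mono fun w hw => ENNReal.ofReal_le_ofReal hw)
  have hkernel_nonneg : ∀ u v, 0 ≤ graphKernel x ε η p f u v := graphKernel_nonneg hε.le hηnonneg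
  have hcompare : ρmin ^ 2 * ∫ w in Ω, ∫ z in Ω,
        (if ‖w - z‖ < b * εt then a else 0) * |F w - F z| ^ p ≤
      (n : ℝ)⁻¹ ^ 2 * ∑ i, ∑ j, graphKernel x ε η p f (x i) (x j) := by
    rw [← ENNReal.ofReal_le_ofReal_iff (mul_nonneg (by positivity)
      (Finset.sum_nonneg fun i _ => Finset.sum_nonneg fun j _ => hkernel_nonneg _ _)),
      ← lintegral_lintegral_ofReal_comp_of_map_eq_empiricalMeasure hT.aemeasurable hpush
        fun i j => hkernel_nonneg _ _]
    exact (ofReal_sq_mul_integral_integral_le_of_smul_le hρmin.le hdensity _).trans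
      (lintegral_mono_ae (hkernel.mono fun w hw =>
        lintegral_mono_ae (hw.mono fun z hz => ENNReal.ofReal_le_ofReal hz)))
  simp only [graphKernel_apply hxinj] at hcompare
  calc _ = εt ^ (-(p + (d : ℝ))) / ρmin ^ 2 * (ρmin ^ 2 * ∫ w in Ω, ∫ z in Ω,
        (if ‖w - z‖ < b * εt then a else 0) * |F w - F z| ^ p) := by
        field_simp
    _ ≤ εt ^ (-(p + (d : ℝ))) / ρmin ^ 2 *
        ((n : ℝ)⁻¹ ^ 2 * ∑ i, ∑ j, η (‖x i - x j‖ / ε) * |f i - f j| ^ p) := by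
        gcongr
    _ = _ := by
        rw [graphEnergy, Real.rpow_neg hεtpos.le, Real.div_rpow hε.le hεtpos.le]
        field_simp

theorem stmt4 (d n : ℕ) (hd : 1 ≤ d) (hn : 1 ≤ n)
    (p a b ρmin ε s εt : ℝ) (hp : 1 ≤ p) (ha : 0 < a) (hb : 0 < b)
    (hρmin : 0 < ρmin) (hε : 0 < ε) (hs : 0 ≤ s)
    (hεt : εt = ε - 2 * s / b) (hεtpos : 0 < εt)
    (η : ℝ → ℝ) (hηnonneg : ∀ t, 0 ≤ t → 0 ≤ η t)
    (hηmono : AntitoneOn η (Set.Ici 0))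
    (hηa : ∀ t ∈ Set.Icc (0 : ℝ) b, a ≤ η t)
    (Ω : Set (EuclideanSpace ℝ (Fin d))) (hΩ : MeasurableSet Ω)
    (ρ : EuclideanSpace ℝ (Fin d) → ℝ)
    (μ : Measure (EuclideanSpace ℝ (Fin d)))
    (hμ : μ = (volume.restrict Ω).withDensity (fun w => ENNReal.ofReal (ρ w)))
    (hprob : IsProbabilityMeasure μ)
    (hρ : ∀ᵐ w ∂(volume.restrict Ω), ρmin ≤ ρ w)
    (x : Fin n → EuclideanSpace ℝ (Fin d)) (hxinj : Function.Injective x)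
    (T : EuclideanSpace ℝ (Fin d) → EuclideanSpace ℝ (Fin d)) (hT : Measurable T)
    (hpush : μ.map T = empiricalMeasure d n x)
    (hclose : ∀ᵐ w ∂μ, ‖T w - w‖ ≤ s)
    (f : Fin n → ℝ)
    (F : EuclideanSpace ℝ (Fin d) → ℝ) (hF : Measurable F)
    (hFf : ∀ᵐ w ∂μ, ∃ i : Fin n, T w = x i ∧ F w = f i) :
    εt ^ (-(p + (d : ℝ))) *
        ∫ w in Ω, ∫ z in Ω,
          (if ‖w - z‖ < b * εt then a else 0) * |F w - F z| ^ p ≤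
      (ε / εt) ^ (p + (d : ℝ)) / ρmin ^ 2 * graphEnergy d n x ε η p f :=
  stmt4_general d n p a b ρmin ε s εt hb hρmin hε hεt hεtpos η hηnonneg hηa Ω ρ μ hμ hρ x hxinj T hT
    hpush hclose f F hFf
end

section
/- Let d ≥ 1, let Ω ⊆ ℝ^d be open, let ε > 0 and β > 0, and let η : [0,∞) → [0,∞) be measurable. Let J : ℝ^d → ℝ be continuously differentiable with support contained in the closed unit ball and with ‖∇J(w)‖ ≤ β · η(‖w‖) for all w ∈ ℝ^d. Let f : ℝ^d → ℝ be integrable and vanish outside Ω, and set g = J_ε ⋆ f. Then for every x ∈ Ω with B̄(x, ε) ⊆ Ω, g is differentiable at x and ‖∇g(x)‖ ≤ β · ε^{-(d+1)} · ∫_Ω η(‖x − z‖/ε) · |f(z) − f(x)| dz, where the right-hand side is interpreted as a Lebesgue integral in [0,∞]. -/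
/-!
Differentiating under the integral sign, `∇g(x) = ∫ f(z) ∇J_ε(x - z) dz`. Since `∇J_ε` has
integral zero, `f(z)` may be replaced by `f(z) - f(x)`; the integrand vanishes unless
`z ∈ B̄(x, ε) ⊆ Ω`, and the chain rule gives `‖∇J_ε(w)‖ ≤ β ε^{-(d+1)} η(‖w‖/ε)`.
-/

open MeasureTheory Metric Set Function
open scoped Convolution

/-- The convolution `J_ε ⋆ f` of `f` with the rescaled kernel `J_ε(w) = ε^{−d} J(w/ε)`. -/
noncomputable def mollify (d : ℕ) (ε : ℝ) (J f : EuclideanSpace ℝ (Fin d) → ℝ) :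
    EuclideanSpace ℝ (Fin d) → ℝ :=
  fun y => ∫ z, (ε ^ d)⁻¹ * J (ε⁻¹ • (y - z)) * f z

section Convolution

variable {E : Type*} [NormedAddCommGroup E] [NormedSpace ℝ E] [FiniteDimensional ℝ E]
  [MeasurableSpace E] [BorelSpace E] {μ : Measure E} [μ.IsAddHaarMeasure]

/-- Integration by parts against the constant function `1`. -/
theorem integral_fderiv_eq_zero_of_hasCompactSupport {K : E → ℝ} (hK : ContDiff ℝ 1 K)
    (hKc : HasCompactSupport K) : ∫ w, fderiv ℝ K w ∂μ = 0 := by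
  have hK' : Integrable (fderiv ℝ K) μ :=
    (hK.continuous_fderiv one_ne_zero).integrable_of_hasCompactSupport (hKc.fderiv (𝕜 := ℝ))
  ext v
  rw [ContinuousLinearMap.integral_apply hK']
  simpa using integral_mul_fderiv_eq_neg_fderiv_mul_of_integrable (μ := μ) (f := fun _ => (1 : ℝ))
    (g := K) (v := v) (by simp) (by simpa using hK'.apply_continuousLinearMap v)
    (by simpa using hK.continuous.integrable_of_hasCompactSupport hKc)
    (fun y _ => differentiableAt_const _) (fun y _ => (hK.differentiable one_ne_zero) y)

theorem hasFDerivAt_convolution_mul_integral_sub {f K : E → ℝ} (hf : LocallyIntegrable f μ)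
    (hK : ContDiff ℝ 1 K) (hKc : HasCompactSupport K) (x : E) :
    HasFDerivAt (f ⋆[ContinuousLinearMap.mul ℝ ℝ, μ] K)
      (∫ t, (f t - f x) • fderiv ℝ K (x - t) ∂μ) x := by
  have hK'c : Continuous (fderiv ℝ K) := hK.continuous_fderiv one_ne_zero
  have hfK' : Integrable (fun t => f t • fderiv ℝ K (x - t)) μ :=
    (hKc.fderiv (𝕜 := ℝ)).convolutionExists_right (ContinuousLinearMap.lsmul ℝ ℝ) hf hK'c x
  have hK'x : Integrable (fun t => fderiv ℝ K (x - t)) μ :=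
    (hK'c.integrable_of_hasCompactSupport (hKc.fderiv (𝕜 := ℝ))).comp_sub_left x
  refine (hKc.hasFDerivAt_convolution_right (ContinuousLinearMap.mul ℝ ℝ) hf hK x).congr_fderiv ?_
  calc (f ⋆[(ContinuousLinearMap.mul ℝ ℝ).precompR E, μ] fderiv ℝ K) x
      = ∫ t, f t • fderiv ℝ K (x - t) ∂μ := rfl
    _ = (∫ t, f t • fderiv ℝ K (x - t) ∂μ) - f x • ∫ t, fderiv ℝ K (x - t) ∂μ := by
        rw [integral_sub_left_eq_self (fderiv ℝ K) μ x,
          integral_fderiv_eq_zero_of_hasCompactSupport hK hKc, smul_zero, sub_zero]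
    _ = ∫ t, (f t - f x) • fderiv ℝ K (x - t) ∂μ := by
        simp_rw [sub_smul]
        rw [← integral_smul]
        exact (integral_sub hfK' (hK'x.smul (f x))).symm

end Convolution

theorem enorm_integral_le_setLIntegral_of_support_subset {α G : Type*} [MeasurableSpace α]
    {μ : Measure α} [NormedAddCommGroup G] [NormedSpace ℝ G] {F : α → G} {s : Set α}
    (hF : support F ⊆ s) : ‖∫ t, F t ∂μ‖ₑ ≤ ∫⁻ t in s, ‖F t‖ₑ ∂μ := by
  rw [setLIntegral_eq_of_support_subset (fun t ht => hF fun h => ht (by simp [h]))]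
  exact enorm_integral_le_lintegral_enorm F

section RescaledKernel

variable {E : Type*} [NormedAddCommGroup E] [NormedSpace ℝ E]

noncomputable def rescaleKernel (d : ℕ) (ε : ℝ) (J : E → ℝ) : E → ℝ :=
  fun w => (ε ^ d)⁻¹ * J (ε⁻¹ • w)

variable {d : ℕ} {ε : ℝ} {J : E → ℝ}

theorem contDiff_rescaleKernel {n : WithTop ℕ∞} (hJ : ContDiff ℝ n J) :
    ContDiff ℝ n (rescaleKernel d ε J) :=
  contDiff_const.mul (hJ.comp (contDiff_const_smul ε⁻¹))

theorem hasCompactSupport_rescaleKernel (hε : ε ≠ 0) (hJ : HasCompactSupport J) :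
    HasCompactSupport (rescaleKernel d ε J) :=
  (hJ.comp_smul (inv_ne_zero hε)).mul_left

theorem fderiv_rescaleKernel (w : E) :
    fderiv ℝ (rescaleKernel d ε J) w = ((ε ^ d)⁻¹ * ε⁻¹) • fderiv ℝ J (ε⁻¹ • w) := by
  change fderiv ℝ ((ε ^ d)⁻¹ • fun w => J (ε⁻¹ • w)) w = _
  rw [fderiv_const_smul_field, Pi.smul_apply, fderiv_comp_smul, smul_smul]

theorem norm_fderiv_rescaleKernel_le (hε : 0 < ε) {β : ℝ} {η : ℝ → ℝ}
    (hJgrad : ∀ w, ‖fderiv ℝ J w‖ ≤ β * η ‖w‖) (w : E) :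
    ‖fderiv ℝ (rescaleKernel d ε J) w‖ ≤ β * ε ^ (-((d : ℝ) + 1)) * η (‖w‖ / ε) := by
  have hscale : ‖ε⁻¹ • w‖ = ‖w‖ / ε := by
    rw [norm_smul, norm_inv, Real.norm_of_nonneg hε.le, inv_mul_eq_div]
  have hpow : ε ^ (-((d : ℝ) + 1)) = (ε ^ d)⁻¹ * ε⁻¹ := by
    rw [Real.rpow_neg hε.le, ← mul_inv, ← pow_succ, ← Real.rpow_natCast]
    push_cast
    rfl
  rw [fderiv_rescaleKernel, norm_smul, Real.norm_of_nonneg (by positivity), hpow, ← hscale]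
  calc (ε ^ d)⁻¹ * ε⁻¹ * ‖fderiv ℝ J (ε⁻¹ • w)‖
      ≤ (ε ^ d)⁻¹ * ε⁻¹ * (β * η ‖ε⁻¹ • w‖) :=
        mul_le_mul_of_nonneg_left (hJgrad _) (by positivity)
    _ = β * ((ε ^ d)⁻¹ * ε⁻¹) * η ‖ε⁻¹ • w‖ := by ring

theorem support_fderiv_rescaleKernel_subset (hε : 0 < ε)
    (hJ : support J ⊆ closedBall 0 1) :
    support (fderiv ℝ (rescaleKernel d ε J)) ⊆ closedBall 0 ε := by
  refine (support_fderiv_subset ℝ).trans (closure_minimal ?_ isClosed_closedBall)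
  intro w hw
  have hJw : ε⁻¹ • w ∈ closedBall (0 : E) 1 := hJ (right_ne_zero_of_mul hw)
  rw [mem_closedBall_zero_iff, norm_smul, norm_inv, Real.norm_of_nonneg hε.le] at hJw
  rw [mem_closedBall_zero_iff]
  rwa [inv_mul_le_iff₀ hε, mul_one] at hJw

end RescaledKernel

theorem mollify_eq_convolution_rescaleKernel (d : ℕ) (ε : ℝ)
    (J f : EuclideanSpace ℝ (Fin d) → ℝ) :
    mollify d ε J f = f ⋆[ContinuousLinearMap.mul ℝ ℝ] rescaleKernel d ε J := by
  ext y
  simp only [mollify, convolution_def, rescaleKernel, ContinuousLinearMap.mul_apply']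
  congr 1
  ext z
  ring

theorem stmt6_general (d : ℕ)
    (Ω : Set (EuclideanSpace ℝ (Fin d)))
    (ε β : ℝ) (hε : 0 < ε) (hβ : 0 < β)
    (η : ℝ → ℝ)
    (J : EuclideanSpace ℝ (Fin d) → ℝ) (hJ : ContDiff ℝ 1 J)
    (hJsupp : Function.support J ⊆ closedBall 0 1)
    (hJgrad : ∀ w, ‖fderiv ℝ J w‖ ≤ β * η ‖w‖)
    (f : EuclideanSpace ℝ (Fin d) → ℝ) (hf : Integrable f)
    (g : EuclideanSpace ℝ (Fin d) → ℝ) (hg : g = mollify d ε J f)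
    (x : EuclideanSpace ℝ (Fin d)) (hxball : closedBall x ε ⊆ Ω) :
    DifferentiableAt ℝ g x ∧
      ENNReal.ofReal ‖fderiv ℝ g x‖ ≤
        ENNReal.ofReal (β * ε ^ (-((d : ℝ) + 1))) *
          ∫⁻ z in Ω, ENNReal.ofReal (η (‖x - z‖ / ε) * |f z - f x|) := by
  set K := rescaleKernel d ε J
  have hKc : HasCompactSupport K :=
    hasCompactSupport_rescaleKernel hε.ne' (HasCompactSupport.intro (isCompact_closedBall 0 1)
      fun w hw => notMem_support.1 fun h => hw (hJsupp h))
  have hD := hasFDerivAt_convolution_mul_integral_sub hf.locallyIntegrable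
    (contDiff_rescaleKernel hJ) hKc x
  rw [hg, mollify_eq_convolution_rescaleKernel]
  refine ⟨hD.differentiableAt, ?_⟩
  have hsupp : support (fun t => (f t - f x) • fderiv ℝ K (x - t)) ⊆ Ω := fun t ht =>
    hxball <| by
      simpa [dist_eq_norm, norm_sub_rev] using
        support_fderiv_rescaleKernel_subset hε hJsupp (right_ne_zero_of_smul ht)
  rw [hD.fderiv, ofReal_norm, ← lintegral_const_mul' _ _ ENNReal.ofReal_ne_top]
  refine (enorm_integral_le_setLIntegral_of_support_subset hsupp).trans (lintegral_mono fun t => ?_)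
  rw [← ENNReal.ofReal_mul (by positivity), ← ofReal_norm, norm_smul, Real.norm_eq_abs]
  refine ENNReal.ofReal_le_ofReal ?_
  calc |f t - f x| * ‖fderiv ℝ K (x - t)‖
      ≤ |f t - f x| * (β * ε ^ (-((d : ℝ) + 1)) * η (‖x - t‖ / ε)) :=
        mul_le_mul_of_nonneg_left (norm_fderiv_rescaleKernel_le hε hJgrad _) (abs_nonneg _)
    _ = _ := by ring

theorem stmt6 (d : ℕ) (hd : 1 ≤ d)
    (Ω : Set (EuclideanSpace ℝ (Fin d))) (hΩ : IsOpen Ω)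
    (ε β : ℝ) (hε : 0 < ε) (hβ : 0 < β)
    (η : ℝ → ℝ) (hη : Measurable η) (hηnonneg : ∀ t, 0 ≤ t → 0 ≤ η t)
    (J : EuclideanSpace ℝ (Fin d) → ℝ) (hJ : ContDiff ℝ 1 J)
    (hJsupp : Function.support J ⊆ closedBall 0 1)
    (hJgrad : ∀ w, ‖fderiv ℝ J w‖ ≤ β * η ‖w‖)
    (f : EuclideanSpace ℝ (Fin d) → ℝ) (hf : Integrable f) (hf0 : ∀ x ∉ Ω, f x = 0)
    (g : EuclideanSpace ℝ (Fin d) → ℝ) (hg : g = mollify d ε J f)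
    (x : EuclideanSpace ℝ (Fin d)) (hx : x ∈ Ω) (hxball : closedBall x ε ⊆ Ω) :
    DifferentiableAt ℝ g x ∧
      ENNReal.ofReal ‖fderiv ℝ g x‖ ≤
        ENNReal.ofReal (β * ε ^ (-((d : ℝ) + 1))) *
          ∫⁻ z in Ω, ENNReal.ofReal (η (‖x - z‖ / ε) * |f z - f x|) :=
  stmt6_general d Ω ε β hε hβ η J hJ hJsupp hJgrad f hf g hg x hxball
end

section
/- Let d ≥ 1 and let η : [0,∞) → [0,∞) be nonincreasing and measurable; define η̃ : [0,∞) → [0,∞) by η̃(t) = η(0) for t ∈ [0,1] and η̃(t) = η(t) for t > 1. Let Ω ⊆ ℝ^d be a Borel set, μ a probability measure on Ω, n ≥ 1, x : Fin n → ℝ^d with empirical measure μ_n, ε > 0, and let T : Ω → ℝ^d be Borel measurable with pushforward μ ∘ T⁻¹ = μ_n and ‖T(w) − w‖ ≤ ε for μ-a.e. w. Then for every y ∈ ℝ^d, (1/n) Σ_{j ∈ Fin n} η(‖y − x j‖/ε) ≤ ∫_Ω η̃(‖y − z‖/(2ε)) dμ(z). If moreover μ has density ρ ≤ ρ_max with respect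 to Lebesgue measure, then ε^{-d} · (1/n) Σ_{j ∈ Fin n} η(‖y − x j‖/ε) ≤ 2^d · ρ_max · ∫_{ℝ^d} η̃(‖w‖) dw. -/
/-! Transporting `μ` onto `μ_n` by a map `T` with `‖T w - w‖ ≤ ε` moves every mass point by at
most `ε`. If `y` is within `2ε` of `w`, the bound `η(‖y - T w‖/ε) ≤ η(0)` is all one can say,
which is why the kernel is flattened on `[0, 1]`; otherwise `‖y - T w‖ ≥ ‖y - w‖ - ε ≥ ‖y - w‖/2`
and monotonicity of `η` applies. Integrating against `μ` gives the first bound; for the second,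
bound the density by `ρmax` and rescale the Lebesgue integral by `2ε`. -/

open MeasureTheory Metric Set
open scoped ENNReal BigOperators

open Module

/-- The kernel `η̃` of the paper. -/
noncomputable def plateauKernel (η : ℝ → ℝ) (t : ℝ) : ℝ := if t ≤ 1 then η 0 else η t

section plateauKernel

variable {η : ℝ → ℝ}

theorem measurable_plateauKernel (hη : Measurable η) : Measurable (plateauKernel η) :=
  Measurable.ite (measurableSet_le measurable_id measurable_const) measurable_const hη

theorem plateauKernel_nonneg (hηnonneg : ∀ t, 0 ≤ t → 0 ≤ η t) {t : ℝ} (ht : 0 ≤ t) :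
    0 ≤ plateauKernel η t := by
  unfold plateauKernel
  split_ifs
  exacts [hηnonneg 0 le_rfl, hηnonneg t ht]

theorem plateauKernel_le (hηmono : AntitoneOn η (Ici 0)) {t : ℝ} (ht : 0 ≤ t) :
    plateauKernel η t ≤ η 0 := by
  unfold plateauKernel
  split_ifs
  exacts [le_rfl, hηmono self_mem_Ici ht ht]

theorem apply_div_le_plateauKernel (hηmono : AntitoneOn η (Ici 0)) {a b ε : ℝ} (hε : 0 < ε)
    (ha : 0 ≤ a) (hba : b ≤ a + ε) : η (a / ε) ≤ plateauKernel η (b / (2 * ε)) := by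
  have haε : 0 ≤ a / ε := div_nonneg ha hε.le
  unfold plateauKernel
  split_ifs with hb
  · exact hηmono self_mem_Ici haε haε
  · have hb' : 2 * ε < b := by
      rwa [not_le, one_lt_div (by positivity)] at hb
    refine hηmono (mem_Ici.2 (div_nonneg (by linarith) (by positivity))) haε ?_
    rw [div_le_div_iff₀ (by positivity) hε]
    nlinarith

end plateauKernel

theorem integral_empiricalMeasure {d n : ℕ} (x : Fin n → EuclideanSpace ℝ (Fin d))
    (f : EuclideanSpace ℝ (Fin d) → ℝ) :
    ∫ z, f z ∂(empiricalMeasure d n x) = (1 / (n : ℝ)) * ∑ j, f (x j) := by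
  rw [empiricalMeasure, integral_smul_measure,
    integral_finsetSum_measure fun j _ => integrable_dirac ENNReal.coe_lt_top]
  simp [integral_dirac]

theorem integrable_plateauKernel_norm_sub_div {E : Type*} [NormedAddCommGroup E]
    [MeasurableSpace E] [OpensMeasurableSpace E] {η : ℝ → ℝ} (hη : Measurable η)
    (hηnonneg : ∀ t, 0 ≤ t → 0 ≤ η t) (hηmono : AntitoneOn η (Ici 0)) (μ : Measure E)
    [IsFiniteMeasure μ] (y : E) {c : ℝ} (hc : 0 ≤ c) :
    Integrable (fun z => plateauKernel η (‖y - z‖ / c)) μ := by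
  have hmeas : Measurable fun z => plateauKernel η (‖y - z‖ / c) :=
    (measurable_plateauKernel hη).comp
      ((continuous_const.sub continuous_id).norm.measurable.div_const c)
  refine .of_bound hmeas.aestronglyMeasurable (η 0) (.of_forall fun z => ?_)
  have hz : 0 ≤ ‖y - z‖ / c := by positivity
  rw [Real.norm_of_nonneg (plateauKernel_nonneg hηnonneg hz)]
  exact plateauKernel_le hηmono hz

theorem sum_apply_div_le_integral_plateauKernel {d n : ℕ} {η : ℝ → ℝ} (hη : Measurable η)
    (hηnonneg : ∀ t, 0 ≤ t → 0 ≤ η t) (hηmono : AntitoneOn η (Ici 0))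
    (μ : Measure (EuclideanSpace ℝ (Fin d))) [IsFiniteMeasure μ]
    (x : Fin n → EuclideanSpace ℝ (Fin d)) {ε : ℝ} (hε : 0 < ε)
    {T : EuclideanSpace ℝ (Fin d) → EuclideanSpace ℝ (Fin d)} (hT : Measurable T)
    (hpush : μ.map T = empiricalMeasure d n x) (hclose : ∀ᵐ w ∂μ, ‖T w - w‖ ≤ ε)
    (y : EuclideanSpace ℝ (Fin d)) :
    (1 / (n : ℝ)) * ∑ j, η (‖y - x j‖ / ε) ≤ ∫ z, plateauKernel η (‖y - z‖ / (2 * ε)) ∂μ := by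
  have hdist : Measurable fun z : EuclideanSpace ℝ (Fin d) => ‖y - z‖ :=
    (measurable_const.sub measurable_id).norm
  have hpointwise : ∀ᵐ w ∂μ, η (‖y - T w‖ / ε) ≤ plateauKernel η (‖y - w‖ / (2 * ε)) := by
    filter_upwards [hclose] with w hw
    refine apply_div_le_plateauKernel hηmono hε (norm_nonneg _) ?_
    calc ‖y - w‖ ≤ ‖y - T w‖ + ‖T w - w‖ := norm_sub_le_norm_sub_add_norm_sub _ _ _
      _ ≤ ‖y - T w‖ + ε := by gcongr
  calc (1 / (n : ℝ)) * ∑ j, η (‖y - x j‖ / ε)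
      = ∫ z, η (‖y - z‖ / ε) ∂(μ.map T) := by rw [hpush, integral_empiricalMeasure]
    _ = ∫ w, η (‖y - T w‖ / ε) ∂μ :=
        integral_map hT.aemeasurable (hη.comp (hdist.div_const ε)).aestronglyMeasurable
    _ ≤ ∫ z, plateauKernel η (‖y - z‖ / (2 * ε)) ∂μ :=
        integral_mono_of_nonneg (.of_forall fun w => hηnonneg _ (by positivity))
          (integrable_plateauKernel_norm_sub_div hη hηnonneg hηmono μ y (by positivity)) hpointwise

theorem lintegral_comp_norm_sub_div {E : Type*} [NormedAddCommGroup E] [NormedSpace ℝ E]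
    [FiniteDimensional ℝ E] [MeasurableSpace E] [BorelSpace E] (μ : Measure E)
    [μ.IsAddHaarMeasure] {F : ℝ → ℝ≥0∞} (hF : Measurable F) (y : E) {c : ℝ} (hc : 0 < c) :
    ∫⁻ w, F (‖y - w‖ / c) ∂μ = ENNReal.ofReal (c ^ finrank ℝ E) * ∫⁻ w, F ‖w‖ ∂μ := by
  have hscale : ∀ w : E, ‖w‖ / c = ‖c⁻¹ • w‖ := fun w => by
    rw [norm_smul, Real.norm_of_nonneg (inv_nonneg.2 hc.le), inv_mul_eq_div]
  simp_rw [norm_sub_rev y, lintegral_sub_right_eq_self (fun w => F (‖w‖ / c)), hscale]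
  rw [← lintegral_map (f := fun w => F ‖w‖) (hF.comp measurable_norm) (measurable_const_smul _),
    Measure.map_addHaar_smul μ (inv_ne_zero hc.ne'), lintegral_smul_measure, inv_pow, inv_inv,
    abs_of_pos (by positivity), smul_eq_mul]

theorem lintegral_withDensity_le_const_mul {α : Type*} [MeasurableSpace α] {ν : Measure α}
    {ρ : α → ℝ≥0∞} {C : ℝ≥0∞} (hρ : ∀ᵐ w ∂ν, ρ w ≤ C) (f : α → ℝ≥0∞) :
    ∫⁻ w, f w ∂(ν.withDensity ρ) ≤ C * ∫⁻ w, f w ∂ν := by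
  calc ∫⁻ w, f w ∂(ν.withDensity ρ) ≤ ∫⁻ w, f w ∂(C • ν) := by
        rw [← withDensity_const]
        exact lintegral_mono' (withDensity_mono hρ) le_rfl
    _ = C * ∫⁻ w, f w ∂ν := lintegral_smul_measure _ _

theorem stmt8_general (d n : ℕ)
    (η : ℝ → ℝ) (hη : Measurable η) (hηnonneg : ∀ t, 0 ≤ t → 0 ≤ η t)
    (hηmono : AntitoneOn η (Set.Ici 0))
    (ηt : ℝ → ℝ) (hηt : ηt = fun t => if t ≤ 1 then η 0 else η t)
    (Ω : Set (EuclideanSpace ℝ (Fin d)))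
    (μ : Measure (EuclideanSpace ℝ (Fin d))) (hprob : IsProbabilityMeasure μ)
    (hμΩ : μ Ωᶜ = 0)
    (x : Fin n → EuclideanSpace ℝ (Fin d)) (ε : ℝ) (hε : 0 < ε)
    (T : EuclideanSpace ℝ (Fin d) → EuclideanSpace ℝ (Fin d)) (hT : Measurable T)
    (hpush : μ.map T = empiricalMeasure d n x)
    (hclose : ∀ᵐ w ∂μ, ‖T w - w‖ ≤ ε) :
    (∀ y : EuclideanSpace ℝ (Fin d),
        (1 / (n : ℝ)) * ∑ j, η (‖y - x j‖ / ε) ≤ ∫ z in Ω, ηt (‖y - z‖ / (2 * ε)) ∂μ) ∧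
    (∀ (ρ : EuclideanSpace ℝ (Fin d) → ℝ) (ρmax : ℝ),
        μ = (volume.restrict Ω).withDensity (fun w => ENNReal.ofReal (ρ w)) →
        (∀ᵐ w ∂(volume.restrict Ω), ρ w ≤ ρmax) →
        ∀ y : EuclideanSpace ℝ (Fin d),
          ENNReal.ofReal (ε ^ (-(d : ℝ)) * ((1 / (n : ℝ)) * ∑ j, η (‖y - x j‖ / ε))) ≤
            ENNReal.ofReal (2 ^ d * ρmax) *
              ∫⁻ w : EuclideanSpace ℝ (Fin d), ENNReal.ofReal (ηt ‖w‖)) := by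
  change ηt = plateauKernel η at hηt
  subst hηt
  have hsum := sum_apply_div_le_integral_plateauKernel hη hηnonneg hηmono μ x hε hT hpush hclose
  refine ⟨fun y => by rw [Measure.restrict_eq_self_of_ae_mem (ae_iff.2 hμΩ)]; exact hsum y,
    fun ρ ρmax hμρ hρmax y => ?_⟩
  have hkernel : Measurable fun t => ENNReal.ofReal (plateauKernel η t) :=
    ENNReal.measurable_ofReal.comp (measurable_plateauKernel hη)
  have hdensity : ∀ᵐ w ∂(volume.restrict Ω), ENNReal.ofReal (ρ w) ≤ ENNReal.ofReal ρmax :=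
    hρmax.mono fun w hw => ENNReal.ofReal_le_ofReal hw
  have hεd : ENNReal.ofReal (ε ^ (-(d : ℝ))) * ENNReal.ofReal ((2 * ε) ^ d) =
      ENNReal.ofReal (2 ^ d) := by
    rw [← ENNReal.ofReal_mul (by positivity), Real.rpow_neg hε.le, Real.rpow_natCast, mul_pow]
    field_simp
  calc ENNReal.ofReal (ε ^ (-(d : ℝ)) * ((1 / (n : ℝ)) * ∑ j, η (‖y - x j‖ / ε)))
      ≤ ENNReal.ofReal (ε ^ (-(d : ℝ))) *
          ∫⁻ z, ENNReal.ofReal (plateauKernel η (‖y - z‖ / (2 * ε))) ∂μ := by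
        rw [ENNReal.ofReal_mul (by positivity), ← ofReal_integral_eq_lintegral_ofReal
          (integrable_plateauKernel_norm_sub_div hη hηnonneg hηmono μ y (by positivity))
          (.of_forall fun z => plateauKernel_nonneg hηnonneg (by positivity))]
        gcongr
        exact hsum y
    _ ≤ ENNReal.ofReal (ε ^ (-(d : ℝ))) * (ENNReal.ofReal ρmax *
          ∫⁻ z, ENNReal.ofReal (plateauKernel η (‖y - z‖ / (2 * ε)))) := by
        rw [hμρ]
        gcongr
        exact (lintegral_withDensity_le_const_mul hdensity _).trans
          (by gcongr; exact Measure.restrict_le_self)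
    _ = ENNReal.ofReal (2 ^ d * ρmax) *
          ∫⁻ w : EuclideanSpace ℝ (Fin d), ENNReal.ofReal (plateauKernel η ‖w‖) := by
        rw [lintegral_comp_norm_sub_div volume hkernel y (by positivity), finrank_euclideanSpace_fin,
          ENNReal.ofReal_mul (by positivity), ← hεd]
        ring

theorem stmt8 (d n : ℕ) (hd : 1 ≤ d) (hn : 1 ≤ n)
    (η : ℝ → ℝ) (hη : Measurable η) (hηnonneg : ∀ t, 0 ≤ t → 0 ≤ η t)
    (hηmono : AntitoneOn η (Set.Ici 0))
    (ηt : ℝ → ℝ) (hηt : ηt = fun t => if t ≤ 1 then η 0 else η t)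
    (Ω : Set (EuclideanSpace ℝ (Fin d))) (hΩ : MeasurableSet Ω)
    (μ : Measure (EuclideanSpace ℝ (Fin d))) (hprob : IsProbabilityMeasure μ)
    (hμΩ : μ Ωᶜ = 0)
    (x : Fin n → EuclideanSpace ℝ (Fin d)) (ε : ℝ) (hε : 0 < ε)
    (T : EuclideanSpace ℝ (Fin d) → EuclideanSpace ℝ (Fin d)) (hT : Measurable T)
    (hpush : μ.map T = empiricalMeasure d n x)
    (hclose : ∀ᵐ w ∂μ, ‖T w - w‖ ≤ ε) :
    (∀ y : EuclideanSpace ℝ (Fin d),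
        (1 / (n : ℝ)) * ∑ j, η (‖y - x j‖ / ε) ≤ ∫ z in Ω, ηt (‖y - z‖ / (2 * ε)) ∂μ) ∧
    (∀ (ρ : EuclideanSpace ℝ (Fin d) → ℝ) (ρmax : ℝ),
        μ = (volume.restrict Ω).withDensity (fun w => ENNReal.ofReal (ρ w)) →
        (∀ᵐ w ∂(volume.restrict Ω), ρ w ≤ ρmax) →
        ∀ y : EuclideanSpace ℝ (Fin d),
          ENNReal.ofReal (ε ^ (-(d : ℝ)) * ((1 / (n : ℝ)) * ∑ j, η (‖y - x j‖ / ε))) ≤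
            ENNReal.ofReal (2 ^ d * ρmax) *
              ∫⁻ w : EuclideanSpace ℝ (Fin d), ENNReal.ofReal (ηt ‖w‖)) :=
  stmt8_general d n η hη hηnonneg hηmono ηt hηt Ω μ hprob hμΩ x ε hε T hT hpush hclose
end

section
/- Let d ≥ 1, p ≥ 1, n ≥ 1, x : Fin n → ℝ^d, ε > 0, η : [0,∞) → [0,∞), M > 0, and let S ⊆ Fin n. Let f, g : Fin n → ℝ satisfy |f i| ≤ M and |g i| ≤ M for all i ∈ Fin n, and f i = g i for all i ∉ S. Then |E_n(f) − E_n(g)| ≤ (2^{p+1} M^p / (ε^{p+d} n²)) · Σ_{i ∈ S} Σ_{j ∈ Fin n} η(‖x i − x j‖/ε). -/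
/-! Both `|f i - f j| ^ p` and `|g i - g j| ^ p` lie in `[0, (2M)^p]`, so each term of
`E_n(f) - E_n(g)` is at most `(2M)^p` times its kernel weight, and it vanishes unless `i ∈ S` or
`j ∈ S`. By symmetry of the weights the pairs with `j ∈ S` contribute as much as those with
`i ∈ S`, which gives the factor `2 · 2^p`. -/

open MeasureTheory Metric Set
open scoped ENNReal BigOperators

open Finset

lemma abs_abs_sub_rpow_sub_abs_sub_rpow_le {a b a' b' M p : ℝ} (hp : 0 ≤ p)
    (ha : |a| ≤ M) (hb : |b| ≤ M) (ha' : |a'| ≤ M) (hb' : |b'| ≤ M) :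
    |(|a - b| ^ p - |a' - b'| ^ p)| ≤ (2 * M) ^ p := by
  have hle : ∀ {u v : ℝ}, |u| ≤ M → |v| ≤ M → |u - v| ^ p ≤ (2 * M) ^ p := fun hu hv =>
    Real.rpow_le_rpow (abs_nonneg _) ((abs_sub _ _).trans (by linarith)) hp
  exact abs_sub_le_of_nonneg_of_le (by positivity) (hle ha hb) (by positivity) (hle ha' hb')

lemma sum_sum_le_two_mul_sum_sum_of_symm {ι : Type*} [Fintype ι] [DecidableEq ι]
    (t : ι → ι → ℝ) (S : Finset ι) (ht : ∀ i j, 0 ≤ t i j) (hsymm : ∀ i j, t i j = t j i)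
    (hzero : ∀ i ∉ S, ∀ j ∉ S, t i j = 0) :
    ∑ i, ∑ j, t i j ≤ 2 * ∑ i ∈ S, ∑ j, t i j := by
  have hsplit : ∀ i j,
      t i j ≤ (if i ∈ S then t i j else 0) + (if j ∈ S then t i j else 0) := by
    intro i j
    by_cases hi : i ∈ S <;> by_cases hj : j ∈ S <;> simp [hi, hj, ht, hzero]
  calc ∑ i, ∑ j, t i j
      ≤ ∑ i, ∑ j, ((if i ∈ S then t i j else 0) + (if j ∈ S then t i j else 0)) :=
        sum_le_sum fun i _ => sum_le_sum fun j _ => hsplit i j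
    _ = ∑ i ∈ S, ∑ j, t i j + ∑ j ∈ S, ∑ i, t j i := by
        simp only [sum_add_distrib, sum_ite_irrel, sum_const_zero, sum_ite_mem, Finset.univ_inter]
        rw [sum_comm (s := univ)]
        simp only [hsymm]
    _ = 2 * ∑ i ∈ S, ∑ j, t i j := by ring

lemma abs_sum_sum_le_sum_sum_abs {ι κ : Type*} (s : Finset ι) (u : Finset κ)
    (t : ι → κ → ℝ) : |∑ i ∈ s, ∑ j ∈ u, t i j| ≤ ∑ i ∈ s, ∑ j ∈ u, |t i j| :=
  (abs_sum_le_sum_abs _ _).trans (sum_le_sum fun _ _ => abs_sum_le_sum_abs _ _)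

lemma graphEnergy_sub_graphEnergy (d n : ℕ) (x : Fin n → EuclideanSpace ℝ (Fin d))
    (ε : ℝ) (η : ℝ → ℝ) (p : ℝ) (f g : Fin n → ℝ) :
    graphEnergy d n x ε η p f - graphEnergy d n x ε η p g =
      (1 / (ε ^ (p + (d : ℝ)) * (n : ℝ) ^ 2)) *
        ∑ i, ∑ j, η (‖x i - x j‖ / ε) * (|f i - f j| ^ p - |g i - g j| ^ p) := by
  simp only [graphEnergy, mul_sub, sum_sub_distrib]

theorem stmt9_general (d n : ℕ)
    (p ε M : ℝ) (hp : 1 ≤ p) (hε : 0 < ε) (hM : 0 < M)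
    (x : Fin n → EuclideanSpace ℝ (Fin d))
    (η : ℝ → ℝ) (hηnonneg : ∀ t, 0 ≤ t → 0 ≤ η t)
    (S : Finset (Fin n))
    (f g : Fin n → ℝ)
    (hfM : ∀ i, |f i| ≤ M) (hgM : ∀ i, |g i| ≤ M)
    (hfg : ∀ i ∉ S, f i = g i) :
    |graphEnergy d n x ε η p f - graphEnergy d n x ε η p g| ≤
      (2 ^ (p + 1) * M ^ p / (ε ^ (p + (d : ℝ)) * (n : ℝ) ^ 2)) *
        ∑ i ∈ S, ∑ j, η (‖x i - x j‖ / ε) := by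
  set w : Fin n → Fin n → ℝ := fun i j => η (‖x i - x j‖ / ε)
  set t : Fin n → Fin n → ℝ := fun i j => w i j * (|f i - f j| ^ p - |g i - g j| ^ p)
  have hw : ∀ i j, 0 ≤ w i j := fun i j => hηnonneg _ (by positivity)
  have ht : ∀ i j, |t i j| ≤ (2 * M) ^ p * w i j := fun i j => by
    rw [abs_mul, abs_of_nonneg (hw i j), mul_comm]
    exact mul_le_mul_of_nonneg_right (abs_abs_sub_rpow_sub_abs_sub_rpow_le (by linarith)
      (hfM i) (hfM j) (hgM i) (hgM j)) (hw i j)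
  have hsymm : ∀ i j, |t i j| = |t j i| := fun i j => by
    simp only [t, w, norm_sub_rev (x i), abs_sub_comm (f i), abs_sub_comm (g i)]
  have hzero : ∀ i ∉ S, ∀ j ∉ S, |t i j| = 0 := fun i hi j hj => by
    simp [t, hfg i hi, hfg j hj]
  rw [graphEnergy_sub_graphEnergy]
  set c := 1 / (ε ^ (p + (d : ℝ)) * (n : ℝ) ^ 2)
  have hc : 0 ≤ c := by positivity
  rw [abs_mul, abs_of_nonneg hc]
  calc c * |∑ i, ∑ j, t i j|
      ≤ c * (2 * ∑ i ∈ S, ∑ j, |t i j|) := by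
        gcongr
        exact (abs_sum_sum_le_sum_sum_abs _ _ _).trans
          (sum_sum_le_two_mul_sum_sum_of_symm _ S (fun _ _ => abs_nonneg _) hsymm hzero)
    _ ≤ c * (2 * ∑ i ∈ S, ∑ j, (2 * M) ^ p * w i j) := by
        gcongr with i _ j; exact ht i j
    _ = _ := by
        rw [Real.mul_rpow zero_le_two hM.le, Real.rpow_add_one two_ne_zero]
        simp only [c, ← mul_sum]
        ring

theorem stmt9 (d n : ℕ) (hd : 1 ≤ d) (hn : 1 ≤ n)
    (p ε M : ℝ) (hp : 1 ≤ p) (hε : 0 < ε) (hM : 0 < M)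
    (x : Fin n → EuclideanSpace ℝ (Fin d))
    (η : ℝ → ℝ) (hηnonneg : ∀ t, 0 ≤ t → 0 ≤ η t)
    (S : Finset (Fin n))
    (f g : Fin n → ℝ)
    (hfM : ∀ i, |f i| ≤ M) (hgM : ∀ i, |g i| ≤ M)
    (hfg : ∀ i ∉ S, f i = g i) :
    |graphEnergy d n x ε η p f - graphEnergy d n x ε η p g| ≤
      (2 ^ (p + 1) * M ^ p / (ε ^ (p + (d : ℝ)) * (n : ℝ) ^ 2)) *
        ∑ i ∈ S, ∑ j, η (‖x i - x j‖ / ε) :=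
  stmt9_general d n p ε M hp hε hM x η hηnonneg S f g hfM hgM hfg
end

section
/- Let d ≥ 1, p ≥ 1, n ≥ 2, x : Fin n → ℝ^d, ε > 0, and let η : [0,∞) → [0,∞) be nonincreasing. Fix k ∈ Fin n and define the spike function f : Fin n → ℝ by f k = 1 and f j = 0 for j ≠ k. Then E_n(f) = (2/(ε^{p+d} n²)) · Σ_{j ≠ k} η(‖x k − x j‖/ε), and in particular E_n(f) ≤ 2 η(0)/(ε^{p+d} n). If moreover there are a Borel set Ω ⊆ ℝ^d, a probability measure μ on Ω with density ρ ≤ ρ_max with respect to Lebesgue measure, and a Borel map T : Ω → ℝ^d with pushforward μ ∘ T⁻¹ equal to the empirical measure μ_n and ‖T(w) − w‖ ≤ ε for μ-a.e. w, and if γ̃ := ∫_{ℝ^d} η̃(‖w‖) dw < ∞ where η̃(t) = η(0) for t ∈ [0,1] and η̃(t) = η(t) for t > 1, then E_n(f) ≤ 2^{d+1} ρ_max γ̃/(ε^p n); hence the spike's energy tends to 0 whenever ε = ε_n satisfies ε_n^p n → ∞. -/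
/-!
Only the pairs `(k, j)` and `(j, k)` with `j ≠ k` see a jump of the spike, of size `1`, which gives
the formula for the energy; bounding each of the `n - 1` kernel values by `η 0` gives the crude
bound. For the refined bound, `(1/n) Σ_j η(‖x k - x j‖/ε)` is the integral of
`w ↦ η(‖x k - T w‖/ε)` against `μ`. Since `T` moves points by at most `ε`, this integrand is at
most `η̃(‖w - x k‖/(2ε))`, and `μ ≤ ρ_max · Lebesgue` together with the change of variables
`w ↦ (w - x k)/(2ε)` bounds the integral by `ρ_max (2ε)^d γ̃`.
-/

open MeasureTheory Metric Set
open scoped ENNReal BigOperators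

open Finset

section Spike

variable {ι : Type*} [Fintype ι] [DecidableEq ι]

theorem sum_sum_mul_abs_sub_indicator_rpow (w : ι → ι → ℝ) (k : ι) {p : ℝ} (hp : p ≠ 0) :
    ∑ i, ∑ j, w i j * |(if i = k then (1 : ℝ) else 0) - (if j = k then 1 else 0)| ^ p =
      ∑ j ∈ univ.erase k, (w k j + w j k) := by
  have hterm : ∀ i j, w i j * |(if i = k then (1 : ℝ) else 0) - (if j = k then 1 else 0)| ^ p =
      (if i = k then (if j = k then 0 else w k j) else 0) +
        (if j = k then (if i = k then 0 else w i k) else 0) := by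
    intro i j
    by_cases hi : i = k <;> by_cases hj : j = k <;> simp [hi, hj, hp]
  simp [hterm, sum_add_distrib, sum_ite, filter_ne']

end Spike

section Energy

variable {d n : ℕ} (x : Fin n → EuclideanSpace ℝ (Fin d)) {ε : ℝ} {η : ℝ → ℝ} {p : ℝ}

theorem graphEnergy_indicator (hp : p ≠ 0) (k : Fin n) :
    graphEnergy d n x ε η p (fun j => if j = k then 1 else 0) =
      2 / (ε ^ (p + (d : ℝ)) * (n : ℝ) ^ 2) * ∑ j ∈ univ.erase k, η (‖x k - x j‖ / ε) := by
  rw [graphEnergy, sum_sum_mul_abs_sub_indicator_rpow _ k hp, mul_sum, mul_sum]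
  refine sum_congr rfl fun j _ => ?_
  rw [norm_sub_rev (x j)]
  ring

theorem graphEnergy_indicator_le (hε : 0 < ε) (hp : p ≠ 0)
    (hη0 : 0 ≤ η 0) (hη : AntitoneOn η (Set.Ici 0)) (k : Fin n) :
    graphEnergy d n x ε η p (fun j => if j = k then 1 else 0) ≤
      2 * η 0 / (ε ^ (p + (d : ℝ)) * n) := by
  have hsum : ∑ j ∈ univ.erase k, η (‖x k - x j‖ / ε) ≤ n * η 0 :=
    calc ∑ j ∈ univ.erase k, η (‖x k - x j‖ / ε) ≤ (univ.erase k).card • η 0 :=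
          sum_le_card_nsmul _ _ _ fun j _ =>
            hη Set.self_mem_Ici (Set.mem_Ici.2 (by positivity)) (by positivity)
      _ ≤ n * η 0 := by
          rw [nsmul_eq_mul]
          gcongr
          exact card_erase_le.trans_eq (card_fin n)
  rw [graphEnergy_indicator x hp k]
  calc 2 / (ε ^ (p + (d : ℝ)) * (n : ℝ) ^ 2) * ∑ j ∈ univ.erase k, η (‖x k - x j‖ / ε)
      ≤ 2 / (ε ^ (p + (d : ℝ)) * (n : ℝ) ^ 2) * (n * η 0) := by gcongr
    _ = 2 * η 0 / (ε ^ (p + (d : ℝ)) * n) := by field_simp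

end Energy

/-- The paper's `η̃`. -/
noncomputable def plateauProfile (η : ℝ → ℝ) (t : ℝ) : ℝ := if t ≤ 1 then η 0 else η t

theorem plateauProfile_nonneg {η : ℝ → ℝ} (hη0 : ∀ t, 0 ≤ t → 0 ≤ η t) {t : ℝ} (ht : 0 ≤ t) :
    0 ≤ plateauProfile η t := by
  unfold plateauProfile
  split_ifs
  exacts [hη0 0 le_rfl, hη0 t ht]

/-- Either `t ≤ 2ε`, where `η̃` sits at its maximum `η 0`, or `s ≥ t / 2`. -/
theorem AntitoneOn.le_plateauProfile {η : ℝ → ℝ} (hη : AntitoneOn η (Set.Ici 0)) {ε s t : ℝ}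
    (hε : 0 < ε) (hs : 0 ≤ s) (hts : t ≤ s + ε) :
    η (s / ε) ≤ plateauProfile η (t / (2 * ε)) := by
  unfold plateauProfile
  split_ifs with h
  · exact hη Set.self_mem_Ici (Set.mem_Ici.2 (by positivity)) (by positivity)
  · have h2ε : 2 * ε < t := (one_lt_div (by positivity)).1 (not_le.1 h)
    refine hη (Set.mem_Ici.2 (div_pos (by linarith) (by positivity)).le)
      (Set.mem_Ici.2 (by positivity)) ?_
    rw [div_le_div_iff₀ (by positivity) hε]
    nlinarith

section Scaling

variable {E : Type*} [NormedAddCommGroup E] [NormedSpace ℝ E] [FiniteDimensional ℝ E]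
  [MeasurableSpace E] [BorelSpace E] (μ : Measure E) [μ.IsAddHaarMeasure] (g : ℝ → ℝ) (y : E)

theorem integral_comp_norm_sub_div {R : ℝ} (hR : 0 < R) :
    ∫ w, g (‖w - y‖ / R) ∂μ = R ^ Module.finrank ℝ E * ∫ w, g ‖w‖ ∂μ := by
  rw [integral_sub_right_eq_self (fun w => g (‖w‖ / R)),
    ← smul_eq_mul, ← Measure.integral_comp_inv_smul_of_nonneg μ (fun w => g ‖w‖) hR.le]
  simp only [norm_smul, norm_inv, Real.norm_of_nonneg hR.le, inv_mul_eq_div]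

theorem MeasureTheory.Integrable.comp_norm_sub_div (hg : Integrable (fun w => g ‖w‖) μ) {R : ℝ}
    (hR : 0 < R) :
    Integrable (fun w => g (‖w - y‖ / R)) μ := by
  have := (hg.comp_smul (inv_ne_zero hR.ne')).comp_sub_right y
  simpa only [norm_smul, norm_inv, Real.norm_of_nonneg hR.le, inv_mul_eq_div] using this

end Scaling

section Empirical

variable {d n : ℕ} {x : Fin n → EuclideanSpace ℝ (Fin d)}

theorem natCast_mul_lintegral_empiricalMeasure (G : EuclideanSpace ℝ (Fin d) → ℝ≥0∞) :
    n * ∫⁻ w, G w ∂empiricalMeasure d n x = ∑ j, G (x j) := by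
  rcases eq_or_ne n 0 with rfl | hn
  · simp
  rw [empiricalMeasure, lintegral_smul_measure, lintegral_finsetSum_measure, smul_eq_mul,
    ← mul_assoc, ENNReal.mul_inv_cancel (by exact_mod_cast hn) (ENNReal.natCast_ne_top n), one_mul]
  simp only [lintegral_dirac]

theorem sum_le_natCast_mul_lintegral_of_map_eq_empiricalMeasure
    {μ ν : Measure (EuclideanSpace ℝ (Fin d))} {c : ℝ≥0∞} (hμν : μ ≤ c • ν)
    {T : EuclideanSpace ℝ (Fin d) → EuclideanSpace ℝ (Fin d)}
    (hmap : μ.map T = empiricalMeasure d n x) {G H : EuclideanSpace ℝ (Fin d) → ℝ≥0∞}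
    (hGH : ∀ᵐ w ∂μ, G (T w) ≤ H w) :
    ∑ j, G (x j) ≤ n * (c * ∫⁻ w, H w ∂ν) := by
  rw [← natCast_mul_lintegral_empiricalMeasure, ← hmap]
  gcongr
  calc ∫⁻ w, G w ∂μ.map T ≤ ∫⁻ w, G (T w) ∂μ := lintegral_map_le G T
    _ ≤ ∫⁻ w, H w ∂μ := lintegral_mono_ae hGH
    _ ≤ ∫⁻ w, H w ∂(c • ν) := lintegral_mono' hμν le_rfl
    _ = c * ∫⁻ w, H w ∂ν := lintegral_smul_measure c H

end Empirical

theorem withDensity_ofReal_le_smul {α : Type*} [MeasurableSpace α] {ν : Measure α} {ρ : α → ℝ}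
    {c : ℝ} (hρ : ∀ᵐ w ∂ν, ρ w ≤ c) :
    ν.withDensity (fun w => ENNReal.ofReal (ρ w)) ≤ ENNReal.ofReal c • ν := by
  rw [← withDensity_const]
  exact withDensity_mono (hρ.mono fun w hw => ENNReal.ofReal_le_ofReal hw)

theorem pos_of_le_ofReal_smul {α : Type*} [MeasurableSpace α] {μ ν : Measure α}
    [IsProbabilityMeasure μ] {c : ℝ} (hμν : μ ≤ ENNReal.ofReal c • ν) : 0 < c := by
  by_contra! hc
  rw [ENNReal.ofReal_of_nonpos hc, zero_smul] at hμν
  exact IsProbabilityMeasure.ne_zero μ (le_bot_iff.1 hμν)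

section Transport

variable {d n : ℕ} {x : Fin n → EuclideanSpace ℝ (Fin d)} {ε : ℝ} {η : ℝ → ℝ}
  {μ : Measure (EuclideanSpace ℝ (Fin d))} {ρmax : ℝ}
  {T : EuclideanSpace ℝ (Fin d) → EuclideanSpace ℝ (Fin d)}

theorem sum_comp_norm_sub_le_of_map_eq_empiricalMeasure (hε : 0 < ε)
    (hη0 : ∀ t, 0 ≤ t → 0 ≤ η t) (hη : AntitoneOn η (Set.Ici 0))
    (hρmax : 0 ≤ ρmax) (hμ : μ ≤ ENNReal.ofReal ρmax • volume)
    (hmap : μ.map T = empiricalMeasure d n x) (hT : ∀ᵐ w ∂μ, ‖T w - w‖ ≤ ε)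
    (hint : Integrable fun w : EuclideanSpace ℝ (Fin d) => plateauProfile η ‖w‖)
    (y : EuclideanSpace ℝ (Fin d)) :
    ∑ j, η (‖y - x j‖ / ε) ≤
      n * (ρmax * ((2 * ε) ^ d * ∫ w : EuclideanSpace ℝ (Fin d), plateauProfile η ‖w‖)) := by
  have h2ε : 0 < 2 * ε := by positivity
  have hγ : 0 ≤ ∫ w : EuclideanSpace ℝ (Fin d), plateauProfile η ‖w‖ :=
    integral_nonneg fun w => plateauProfile_nonneg hη0 (norm_nonneg w)
  have hbound := sum_le_natCast_mul_lintegral_of_map_eq_empiricalMeasure hμ hmap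
    (G := fun z : EuclideanSpace ℝ (Fin d) => ENNReal.ofReal (η (‖y - z‖ / ε)))
    (H := fun w : EuclideanSpace ℝ (Fin d) =>
      ENNReal.ofReal (plateauProfile η (‖w - y‖ / (2 * ε)))) <| by
      filter_upwards [hT] with w hw
      refine ENNReal.ofReal_le_ofReal (hη.le_plateauProfile hε (norm_nonneg _) ?_)
      rw [norm_sub_rev]
      linarith [norm_sub_le_norm_sub_add_norm_sub y (T w) w]
  rw [← ofReal_integral_eq_lintegral_ofReal (hint.comp_norm_sub_div volume _ y h2ε)
      (ae_of_all _ fun w => plateauProfile_nonneg hη0 (by positivity)),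
    integral_comp_norm_sub_div volume _ y h2ε, finrank_euclideanSpace_fin,
    ← ENNReal.ofReal_sum_of_nonneg fun j _ => hη0 _ (by positivity), ← ENNReal.ofReal_mul hρmax,
    ← ENNReal.ofReal_natCast, ← ENNReal.ofReal_mul (Nat.cast_nonneg n)] at hbound
  exact (ENNReal.ofReal_le_ofReal_iff (by positivity)).1 hbound

end Transport

theorem graphEnergy_indicator_le_of_map_eq_empiricalMeasure {d n : ℕ}
    {x : Fin n → EuclideanSpace ℝ (Fin d)} {ε : ℝ} (hε : 0 < ε) {η : ℝ → ℝ}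
    (hη0 : ∀ t, 0 ≤ t → 0 ≤ η t) (hη : AntitoneOn η (Set.Ici 0)) {p : ℝ} (hp : p ≠ 0)
    {μ : Measure (EuclideanSpace ℝ (Fin d))} {ρmax : ℝ} (hρmax : 0 ≤ ρmax)
    (hμ : μ ≤ ENNReal.ofReal ρmax • volume)
    {T : EuclideanSpace ℝ (Fin d) → EuclideanSpace ℝ (Fin d)}
    (hmap : μ.map T = empiricalMeasure d n x) (hT : ∀ᵐ w ∂μ, ‖T w - w‖ ≤ ε)
    (hint : Integrable fun w : EuclideanSpace ℝ (Fin d) => plateauProfile η ‖w‖) (k : Fin n) :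
    graphEnergy d n x ε η p (fun j => if j = k then 1 else 0) ≤
      2 ^ (d + 1) * ρmax * (∫ w : EuclideanSpace ℝ (Fin d), plateauProfile η ‖w‖) /
        (ε ^ p * n) := by
  have hn : (n : ℝ) ≠ 0 := Nat.cast_ne_zero.2 k.pos.ne'
  have hsum : ∑ j ∈ univ.erase k, η (‖x k - x j‖ / ε) ≤ ∑ j, η (‖x k - x j‖ / ε) :=
    sum_le_sum_of_subset_of_nonneg (erase_subset k univ) fun j _ _ => hη0 _ (by positivity)
  rw [graphEnergy_indicator x hp k]
  calc 2 / (ε ^ (p + (d : ℝ)) * (n : ℝ) ^ 2) * ∑ j ∈ univ.erase k, η (‖x k - x j‖ / ε)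
      ≤ 2 / (ε ^ (p + (d : ℝ)) * (n : ℝ) ^ 2) *
          (n * (ρmax * ((2 * ε) ^ d * ∫ w : EuclideanSpace ℝ (Fin d), plateauProfile η ‖w‖))) := by
        gcongr
        exact hsum.trans (sum_comp_norm_sub_le_of_map_eq_empiricalMeasure hε hη0 hη hρmax hμ
          hmap hT hint (x k))
    _ = 2 ^ (d + 1) * ρmax * (∫ w : EuclideanSpace ℝ (Fin d), plateauProfile η ‖w‖) /
        (ε ^ p * n) := by
        rw [Real.rpow_add hε, Real.rpow_natCast]
        field_simp
        ring

theorem stmt11_general (d n : ℕ)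
    (p : ℝ) (hp : 1 ≤ p)
    (x : Fin n → EuclideanSpace ℝ (Fin d)) (ε : ℝ) (hε : 0 < ε)
    (η : ℝ → ℝ) (hηnonneg : ∀ t, 0 ≤ t → 0 ≤ η t)
    (hηmono : AntitoneOn η (Set.Ici 0))
    (k : Fin n) (f : Fin n → ℝ) (hf : f = fun j => if j = k then (1 : ℝ) else 0) :
    graphEnergy d n x ε η p f =
        (2 / (ε ^ (p + (d : ℝ)) * (n : ℝ) ^ 2)) *
          ∑ j ∈ Finset.univ.erase k, η (‖x k - x j‖ / ε) ∧
    graphEnergy d n x ε η p f ≤ 2 * η 0 / (ε ^ (p + (d : ℝ)) * n) ∧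
    (∀ (Ω : Set (EuclideanSpace ℝ (Fin d))), MeasurableSet Ω →
      ∀ (ρ : EuclideanSpace ℝ (Fin d) → ℝ) (ρmax : ℝ)
        (μ : Measure (EuclideanSpace ℝ (Fin d))),
        μ = (volume.restrict Ω).withDensity (fun w => ENNReal.ofReal (ρ w)) →
        IsProbabilityMeasure μ →
        (∀ᵐ w ∂(volume.restrict Ω), ρ w ≤ ρmax) →
      ∀ (T : EuclideanSpace ℝ (Fin d) → EuclideanSpace ℝ (Fin d)), Measurable T →
        μ.map T = empiricalMeasure d n x →
        (∀ᵐ w ∂μ, ‖T w - w‖ ≤ ε) →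
      ∀ (ηt : ℝ → ℝ), ηt = (fun t => if t ≤ 1 then η 0 else η t) →
      ∀ (γ : ℝ), Integrable (fun w : EuclideanSpace ℝ (Fin d) => ηt ‖w‖) →
        γ = ∫ w : EuclideanSpace ℝ (Fin d), ηt ‖w‖ →
        graphEnergy d n x ε η p f ≤ 2 ^ (d + 1) * ρmax * γ / (ε ^ p * n)) := by
  subst hf
  have hp0 : p ≠ 0 := by positivity
  refine ⟨graphEnergy_indicator x hp0 k,
    graphEnergy_indicator_le x hε hp0 (hηnonneg 0 le_rfl) hηmono k, ?_⟩
  intro Ω _ ρ ρmax μ hμ _ hρ T _ hmap hT ηt hηt γ hint hγ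
  subst hμ hηt hγ
  have hμle : (volume.restrict Ω).withDensity (fun w => ENNReal.ofReal (ρ w)) ≤
      ENNReal.ofReal ρmax • volume :=
    (withDensity_ofReal_le_smul hρ).trans (by gcongr; exact Measure.restrict_le_self)
  exact graphEnergy_indicator_le_of_map_eq_empiricalMeasure hε hηnonneg hηmono hp0
    (pos_of_le_ofReal_smul hμle).le hμle hmap hT hint k

theorem stmt11 (d n : ℕ) (hd : 1 ≤ d) (hn : 2 ≤ n)
    (p : ℝ) (hp : 1 ≤ p)
    (x : Fin n → EuclideanSpace ℝ (Fin d)) (ε : ℝ) (hε : 0 < ε)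
    (η : ℝ → ℝ) (hηnonneg : ∀ t, 0 ≤ t → 0 ≤ η t)
    (hηmono : AntitoneOn η (Set.Ici 0))
    (k : Fin n) (f : Fin n → ℝ) (hf : f = fun j => if j = k then (1 : ℝ) else 0) :
    graphEnergy d n x ε η p f =
        (2 / (ε ^ (p + (d : ℝ)) * (n : ℝ) ^ 2)) *
          ∑ j ∈ Finset.univ.erase k, η (‖x k - x j‖ / ε) ∧
    graphEnergy d n x ε η p f ≤ 2 * η 0 / (ε ^ (p + (d : ℝ)) * n) ∧
    (∀ (Ω : Set (EuclideanSpace ℝ (Fin d))), MeasurableSet Ω →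
      ∀ (ρ : EuclideanSpace ℝ (Fin d) → ℝ) (ρmax : ℝ)
        (μ : Measure (EuclideanSpace ℝ (Fin d))),
        μ = (volume.restrict Ω).withDensity (fun w => ENNReal.ofReal (ρ w)) →
        IsProbabilityMeasure μ →
        (∀ᵐ w ∂(volume.restrict Ω), ρ w ≤ ρmax) →
      ∀ (T : EuclideanSpace ℝ (Fin d) → EuclideanSpace ℝ (Fin d)), Measurable T →
        μ.map T = empiricalMeasure d n x →
        (∀ᵐ w ∂μ, ‖T w - w‖ ≤ ε) →
      ∀ (ηt : ℝ → ℝ), ηt = (fun t => if t ≤ 1 then η 0 else η t) →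
      ∀ (γ : ℝ), Integrable (fun w : EuclideanSpace ℝ (Fin d) => ηt ‖w‖) →
        γ = ∫ w : EuclideanSpace ℝ (Fin d), ηt ‖w‖ →
        graphEnergy d n x ε η p f ≤ 2 ^ (d + 1) * ρmax * γ / (ε ^ p * n)) :=
  stmt11_general d n p hp x ε hε η hηnonneg hηmono k f hf
end

section
/- Let d ≥ 1 and p > d. Let Ω ⊆ ℝ^d be open, x₁ ∈ Ω, y₁ ∈ ℝ, and δ > 0 with the closed ball B̄(x₁, 4δ) contained in Ω. Let θ : ℝ^d → [0,1] be continuously differentiable with θ = 1 on B̄(0,1), θ = 0 outside the open ball B(0,2), and ‖∇θ(z)‖ ≤ 2 for all z; set θ_δ(z) = θ(z/δ). Let ρ : Ω → ℝ be measurable with 0 ≤ ρ ≤ ρ_max, and let f : Ω → ℝ be differentiable on Ω with f(x₁) = y₁ and ∫_Ω ‖∇f‖^p dx < ∞. Assume the Morrey-type bound: there is K ≥ 0 such that |f(x) − f(x₁)|^p ≤ K · δ^{p−d} · ∫_{B̄(x₁,4δ)} ‖∇f(z)‖^p dz for all x ∈ B̄(x₁, 2δ). Define g : Ω → ℝ by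 g(x) = (1 − θ_δ(x − x₁)) f(x) + θ_δ(x − x₁) y₁. Then g = y₁ on B̄(x₁, δ), g = f on Ω ∖ B(x₁, 2δ), and there is a constant C depending only on p, d and K such that | ∫_Ω ‖∇g(x)‖^p ρ(x)² dx − ∫_Ω ‖∇f(x)‖^p ρ(x)² dx | ≤ C · ρ_max² · ∫_{B̄(x₁,4δ)} ‖∇f(z)‖^p dz. -/
/-!
Away from `B(x₁, 2δ)` the rescaled cutoff vanishes together with its derivative (a nonnegative
function has a critical point at each of its zeros), so `g = f` and `∇g = ∇f` there, and the two
energies differ only on `B̄(x₁, 2δ)`. On that ball `∇g = (1 - θ_δ) ∇f + (y₁ - f) ∇θ_δ` with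
`‖∇θ_δ‖ ≤ 2 / δ`, so `‖∇g‖^p ≲ ‖∇f‖^p + δ^{-p} |f - f x₁|^p`. The Morrey bound turns the second term
into `K δ^{-d} ∫_{B̄(x₁, 4δ)} ‖∇f‖^p`, and integrating over a ball of volume `(2δ)^d |B̄(0, 1)|`
cancels the `δ^{-d}`.
-/

open MeasureTheory Metric Set

lemma Real.add_rpow_le_two_rpow_mul_rpow_add_rpow {a b p : ℝ} (ha : 0 ≤ a) (hb : 0 ≤ b)
    (hp : 0 ≤ p) : (a + b) ^ p ≤ 2 ^ p * (a ^ p + b ^ p) := by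
  have hmax : max a b ^ p ≤ a ^ p + b ^ p := by
    rcases max_choice a b with h | h <;> rw [h]
    · linarith [Real.rpow_nonneg hb p]
    · linarith [Real.rpow_nonneg ha p]
  calc (a + b) ^ p ≤ (2 * max a b) ^ p := by
        gcongr
        rw [two_mul]
        exact add_le_add (le_max_left a b) (le_max_right a b)
    _ = 2 ^ p * max a b ^ p := Real.mul_rpow zero_le_two (le_max_of_le_left ha)
    _ ≤ 2 ^ p * (a ^ p + b ^ p) := by gcongr

lemma Real.div_rpow_mul_rpow_sub_mul_pow {δ : ℝ} (hδ : 0 < δ) {a : ℝ} (ha : 0 ≤ a) (b p : ℝ)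
    (n : ℕ) : (a / δ) ^ p * δ ^ (p - n) * (b * δ) ^ n = a ^ p * b ^ n := by
  rw [Real.div_rpow ha hδ.le, Real.rpow_sub hδ, Real.rpow_natCast, mul_pow]
  have : 0 < δ ^ p := Real.rpow_pos_of_pos hδ p
  field_simp

section Cutoff

variable {E F : Type*} [NormedAddCommGroup E] [NormedSpace ℝ E]
  [NormedAddCommGroup F] [NormedSpace ℝ F]

lemma norm_inv_smul_sub {δ : ℝ} (hδ : 0 < δ) (z x₀ : E) :
    ‖δ⁻¹ • (z - x₀)‖ = dist z x₀ / δ := by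
  rw [norm_smul, Real.norm_of_nonneg (inv_nonneg.2 hδ.le), dist_eq_norm, inv_mul_eq_div]

lemma fderiv_eq_zero_of_nonneg_of_eq_zero {θ : E → ℝ} {z : E} (hθ : ∀ w, 0 ≤ θ w)
    (hz : θ z = 0) : fderiv ℝ θ z = 0 :=
  IsLocalMin.fderiv_eq_zero (Filter.Eventually.of_forall fun w => hz ▸ hθ w)

lemma hasFDerivAt_comp_inv_smul_sub {θ : E → ℝ} {δ : ℝ} {x₀ z : E}
    (hθ : DifferentiableAt ℝ θ (δ⁻¹ • (z - x₀))) :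
    HasFDerivAt (fun w => θ (δ⁻¹ • (w - x₀))) (δ⁻¹ • fderiv ℝ θ (δ⁻¹ • (z - x₀))) z := by
  have hu : HasFDerivAt (fun w => δ⁻¹ • (w - x₀)) (δ⁻¹ • ContinuousLinearMap.id ℝ E) z :=
    ((hasFDerivAt_id z).sub_const x₀).const_smul δ⁻¹
  exact (hθ.hasFDerivAt.comp z hu).congr_fderiv (by ext v; simp)

lemma norm_one_sub_smul_add_smul_le {t : ℝ} (ht₀ : 0 ≤ t) (ht₁ : t ≤ 1) (s : ℝ) (u v : F) :
    ‖(1 - t) • u + s • v‖ ≤ ‖u‖ + |s| * ‖v‖ := by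
  have h : ‖(1 - t) • u‖ ≤ ‖u‖ := by
    rw [norm_smul, Real.norm_of_nonneg (by linarith)]
    exact mul_le_of_le_one_left (norm_nonneg u) (by linarith)
  calc ‖(1 - t) • u + s • v‖ ≤ ‖(1 - t) • u‖ + ‖s • v‖ := norm_add_le _ _
    _ ≤ ‖u‖ + |s| * ‖v‖ := by rw [norm_smul s v, Real.norm_eq_abs]; linarith

noncomputable def cutoffBlend (θ : E → ℝ) (δ : ℝ) (x₀ : E) (f : E → ℝ) (y : ℝ) : E → ℝ :=
  fun w => (1 - θ (δ⁻¹ • (w - x₀))) * f w + θ (δ⁻¹ • (w - x₀)) * y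

variable {θ f : E → ℝ} {δ y : ℝ} {x₀ z : E}

lemma cutoffBlend_eq_of_mem_closedBall (hθ : ∀ w ∈ closedBall (0 : E) 1, θ w = 1) (hδ : 0 < δ)
    (hz : z ∈ closedBall x₀ δ) : cutoffBlend θ δ x₀ f y z = y := by
  have : δ⁻¹ • (z - x₀) ∈ closedBall (0 : E) 1 := by
    rw [mem_closedBall_zero_iff, norm_inv_smul_sub hδ, div_le_one hδ]
    exact mem_closedBall.1 hz
  simp [cutoffBlend, hθ _ this]

lemma cutoff_eq_zero_of_le_dist {R : ℝ} (hθ : ∀ w ∉ ball (0 : E) R, θ w = 0) (hδ : 0 < δ)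
    (hz : R * δ ≤ dist z x₀) : θ (δ⁻¹ • (z - x₀)) = 0 := by
  refine hθ _ ?_
  rw [mem_ball_zero_iff, norm_inv_smul_sub hδ, not_lt, le_div_iff₀ hδ]
  exact hz

lemma cutoffBlend_eq_of_le_dist {R : ℝ} (hθ : ∀ w ∉ ball (0 : E) R, θ w = 0) (hδ : 0 < δ)
    (hz : R * δ ≤ dist z x₀) : cutoffBlend θ δ x₀ f y z = f z := by
  simp [cutoffBlend, cutoff_eq_zero_of_le_dist hθ hδ hz]

lemma hasFDerivAt_cutoffBlend (hθ : Differentiable ℝ θ) (hf : DifferentiableAt ℝ f z) :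
    HasFDerivAt (cutoffBlend θ δ x₀ f y)
      ((1 - θ (δ⁻¹ • (z - x₀))) • fderiv ℝ f z +
        (y - f z) • δ⁻¹ • fderiv ℝ θ (δ⁻¹ • (z - x₀))) z := by
  have hη := hasFDerivAt_comp_inv_smul_sub (x₀ := x₀) (z := z) (hθ (δ⁻¹ • (z - x₀)))
  refine (((hη.const_sub 1).mul hf.hasFDerivAt).add (hη.mul_const y)).congr_fderiv ?_
  module

lemma norm_fderiv_cutoffBlend_le (hθ : Differentiable ℝ θ) (hθ₀₁ : ∀ w, 0 ≤ θ w ∧ θ w ≤ 1)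
    {B : ℝ} (hθB : ∀ w, ‖fderiv ℝ θ w‖ ≤ B) (hδ : 0 < δ) (hf : DifferentiableAt ℝ f z) :
    ‖fderiv ℝ (cutoffBlend θ δ x₀ f y) z‖ ≤ ‖fderiv ℝ f z‖ + B / δ * |f z - y| := by
  rw [(hasFDerivAt_cutoffBlend hθ hf).fderiv]
  refine (norm_one_sub_smul_add_smul_le (hθ₀₁ _).1 (hθ₀₁ _).2 _ _ _).trans ?_
  rw [norm_smul, Real.norm_of_nonneg (inv_nonneg.2 hδ.le), abs_sub_comm]
  rw [mul_comm, div_eq_inv_mul]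
  gcongr
  exact hθB _

lemma fderiv_cutoffBlend_eq_of_le_dist (hθ : Differentiable ℝ θ) (hθ₀ : ∀ w, 0 ≤ θ w) {R : ℝ}
    (hθR : ∀ w ∉ ball (0 : E) R, θ w = 0) (hδ : 0 < δ) (hf : DifferentiableAt ℝ f z)
    (hz : R * δ ≤ dist z x₀) : fderiv ℝ (cutoffBlend θ δ x₀ f y) z = fderiv ℝ f z := by
  have hzero := cutoff_eq_zero_of_le_dist hθR hδ hz
  rw [(hasFDerivAt_cutoffBlend hθ hf).fderiv, hzero,
    fderiv_eq_zero_of_nonneg_of_eq_zero hθ₀ hzero]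
  simp

end Cutoff

section SetIntegral

variable {α : Type*} [MeasurableSpace α] {μ : Measure α} {s t : Set α}

lemma integrableOn_of_le_mul_add (ht : MeasurableSet t) (hμt : μ t ≠ ⊤) {F G : α → ℝ}
    {A B : ℝ} (hG : AEStronglyMeasurable G (μ.restrict t)) (hG₀ : ∀ x ∈ t, 0 ≤ G x)
    (hGF : ∀ x ∈ t, G x ≤ A * F x + B) (hF : IntegrableOn F t μ) : IntegrableOn G t μ := by
  refine ((hF.const_mul A).add (integrableOn_const (C := B) hμt)).mono' hG ?_
  refine (ae_restrict_iff' ht).2 (Filter.Eventually.of_forall fun x hx => ?_)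
  rw [Real.norm_of_nonneg (hG₀ x hx)]
  exact hGF x hx

lemma setIntegral_le_mul_add (ht : MeasurableSet t) (hμt : μ t ≠ ⊤) {F G : α → ℝ} {A B : ℝ}
    (hG : IntegrableOn G t μ) (hGF : ∀ x ∈ t, G x ≤ A * F x + B) (hF : IntegrableOn F t μ) :
    ∫ x in t, G x ∂μ ≤ A * ∫ x in t, F x ∂μ + B * μ.real t := by
  have hAF := hF.const_mul A
  calc ∫ x in t, G x ∂μ ≤ ∫ x in t, (A * F x + B) ∂μ :=
        setIntegral_mono_on hG (hAF.add (integrableOn_const (C := B) hμt)) ht hGF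
    _ = A * ∫ x in t, F x ∂μ + B * μ.real t := by
        rw [integral_add hAF (integrableOn_const (C := B) hμt), integral_const_mul,
          setIntegral_const, smul_eq_mul, mul_comm B]

lemma abs_setIntegral_mul_sub_le (hs : MeasurableSet s) (ht : MeasurableSet t) (hts : t ⊆ s)
    {a b w : α → ℝ} {W : ℝ} (ha₀ : ∀ x, 0 ≤ a x) (hb₀ : ∀ x, 0 ≤ b x)
    (hw : AEStronglyMeasurable w μ) (hw₀ : ∀ x, 0 ≤ w x) (hwW : ∀ x, w x ≤ W)
    (ha : IntegrableOn a t μ) (hb : IntegrableOn b s μ) (hab : EqOn a b (s \ t)) :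
    |∫ x in s, a x * w x ∂μ - ∫ x in s, b x * w x ∂μ| ≤
      W * (∫ x in t, a x ∂μ + ∫ x in t, b x ∂μ) := by
  have hmul : ∀ {c : α → ℝ} {u : Set α}, IntegrableOn c u μ →
      IntegrableOn (fun x => c x * w x) u μ := fun hc =>
    hc.mul_bdd hw.restrict (ae_of_all _ fun x => (Real.norm_of_nonneg (hw₀ x)).trans_le (hwW x))
  have hweighted : ∀ {c : α → ℝ}, (∀ x, 0 ≤ c x) → IntegrableOn c t μ →
      0 ≤ ∫ x in t, c x * w x ∂μ ∧ ∫ x in t, c x * w x ∂μ ≤ W * ∫ x in t, c x ∂μ :=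
    fun hc₀ hc => ⟨integral_nonneg fun x => mul_nonneg (hc₀ x) (hw₀ x), by
      rw [← integral_const_mul]
      exact integral_mono (hmul hc) (hc.const_mul W) fun x => by
        rw [mul_comm W]; exact mul_le_mul_of_nonneg_left (hwW x) (hc₀ x)⟩
  have hdiff : EqOn (fun x => a x * w x) (fun x => b x * w x) (s \ t) := fun x hx => by
    simp only [hab hx]
  have hbw := hmul hb
  have haw : IntegrableOn (fun x => a x * w x) s μ := by
    rw [← union_sdiff_cancel hts]
    exact (hmul ha).union ((hbw.mono_set sdiff_subset).congr_fun hdiff.symm (hs.diff ht))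
  have hsplit_a := integral_inter_add_sdiff ht haw
  have hsplit_b := integral_inter_add_sdiff ht hbw
  rw [inter_eq_right.2 hts, setIntegral_congr_fun (hs.diff ht) hdiff] at hsplit_a
  rw [inter_eq_right.2 hts] at hsplit_b
  obtain ⟨ha₁, ha₂⟩ := hweighted ha₀ ha
  obtain ⟨hb₁, hb₂⟩ := hweighted hb₀ (hb.mono_set hts)
  rw [abs_le]
  constructor <;> linarith

end SetIntegral

lemma setIntegral_norm_fderiv_cutoffBlend_rpow_le {d : ℕ} {p K δ : ℝ} (hp : 0 ≤ p) (hδ : 0 < δ)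
    {θ f : EuclideanSpace ℝ (Fin d) → ℝ} {x₀ : EuclideanSpace ℝ (Fin d)}
    (hθ : Differentiable ℝ θ) (hθ₀₁ : ∀ w, 0 ≤ θ w ∧ θ w ≤ 1) (hθ₂ : ∀ w, ‖fderiv ℝ θ w‖ ≤ 2)
    (hf : ∀ z ∈ closedBall x₀ (2 * δ), DifferentiableAt ℝ f z)
    (hfp : IntegrableOn (fun z => ‖fderiv ℝ f z‖ ^ p) (closedBall x₀ (4 * δ)))
    (hMorrey : ∀ z ∈ closedBall x₀ (2 * δ), |f z - f x₀| ^ p ≤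
      K * δ ^ (p - d) * ∫ w in closedBall x₀ (4 * δ), ‖fderiv ℝ f w‖ ^ p) :
    IntegrableOn (fun z => ‖fderiv ℝ (cutoffBlend θ δ x₀ f (f x₀)) z‖ ^ p)
        (closedBall x₀ (2 * δ)) ∧
      ∫ z in closedBall x₀ (2 * δ), ‖fderiv ℝ (cutoffBlend θ δ x₀ f (f x₀)) z‖ ^ p ≤
        2 ^ p * (1 + 2 ^ p * 2 ^ d * K *
          volume.real (closedBall (0 : EuclideanSpace ℝ (Fin d)) 1)) *
          ∫ w in closedBall x₀ (4 * δ), ‖fderiv ℝ f w‖ ^ p := by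
  set g := cutoffBlend θ δ x₀ f (f x₀)
  set E₄ := ∫ w in closedBall x₀ (4 * δ), ‖fderiv ℝ f w‖ ^ p
  set M := K * δ ^ (p - d) * E₄
  have hpointwise : ∀ z ∈ closedBall x₀ (2 * δ),
      ‖fderiv ℝ g z‖ ^ p ≤ 2 ^ p * ‖fderiv ℝ f z‖ ^ p + 2 ^ p * (2 / δ) ^ p * M := by
    intro z hz
    have h2δ : 0 ≤ 2 / δ := by positivity
    calc ‖fderiv ℝ g z‖ ^ p ≤ (‖fderiv ℝ f z‖ + 2 / δ * |f z - f x₀|) ^ p :=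
          Real.rpow_le_rpow (norm_nonneg _)
            (norm_fderiv_cutoffBlend_le hθ hθ₀₁ hθ₂ hδ (hf z hz)) hp
      _ ≤ 2 ^ p * (‖fderiv ℝ f z‖ ^ p + (2 / δ * |f z - f x₀|) ^ p) :=
          Real.add_rpow_le_two_rpow_mul_rpow_add_rpow (norm_nonneg _) (by positivity) hp
      _ = 2 ^ p * ‖fderiv ℝ f z‖ ^ p + 2 ^ p * (2 / δ) ^ p * |f z - f x₀| ^ p := by
          rw [Real.mul_rpow h2δ (abs_nonneg _)]; ring
      _ ≤ 2 ^ p * ‖fderiv ℝ f z‖ ^ p + 2 ^ p * (2 / δ) ^ p * M := by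
          gcongr; exact hMorrey z hz
  have hB₂ : closedBall x₀ (2 * δ) ⊆ closedBall x₀ (4 * δ) :=
    closedBall_subset_closedBall (by linarith)
  have hμ : volume (closedBall x₀ (2 * δ)) ≠ ⊤ := measure_closedBall_lt_top.ne
  have hfp₂ := hfp.mono_set hB₂
  have hgp : IntegrableOn (fun z => ‖fderiv ℝ g z‖ ^ p) (closedBall x₀ (2 * δ)) :=
    integrableOn_of_le_mul_add measurableSet_closedBall hμ
      ((measurable_fderiv ℝ g).norm.pow_const p).aestronglyMeasurable
      (fun z _ => by positivity) hpointwise hfp₂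
  have hE₂ : ∫ z in closedBall x₀ (2 * δ), ‖fderiv ℝ f z‖ ^ p ≤ E₄ :=
    setIntegral_mono_set hfp (ae_of_all _ fun z => by positivity) hB₂.eventuallyLE
  have hscale := Real.div_rpow_mul_rpow_sub_mul_pow hδ zero_le_two 2 p d
  refine ⟨hgp, ?_⟩
  calc ∫ z in closedBall x₀ (2 * δ), ‖fderiv ℝ g z‖ ^ p
      ≤ (2 ^ p * ∫ z in closedBall x₀ (2 * δ), ‖fderiv ℝ f z‖ ^ p) +
          2 ^ p * (2 / δ) ^ p * M * volume.real (closedBall x₀ (2 * δ)) :=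
        setIntegral_le_mul_add measurableSet_closedBall hμ hgp hpointwise hfp₂
    _ ≤ 2 ^ p * E₄ + 2 ^ p * (2 / δ) ^ p * M * volume.real (closedBall x₀ (2 * δ)) := by
        gcongr
    _ = _ := by
        rw [Measure.addHaar_real_closedBall' volume x₀ (by positivity), finrank_euclideanSpace_fin]
        linear_combination
          (2 ^ p * K * E₄ * volume.real (closedBall (0 : EuclideanSpace ℝ (Fin d)) 1)) * hscale

theorem stmt13_general (d : ℕ) (p : ℝ) (hpd : (d : ℝ) < p)
    (K : ℝ) (hK : 0 ≤ K) :
    ∃ C : ℝ, 0 < C ∧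
      ∀ (Ω : Set (EuclideanSpace ℝ (Fin d))), IsOpen Ω →
      ∀ (x₁ : EuclideanSpace ℝ (Fin d)), x₁ ∈ Ω →
      ∀ (y₁ : ℝ) (δ : ℝ), 0 < δ → closedBall x₁ (4 * δ) ⊆ Ω →
      ∀ (θ : EuclideanSpace ℝ (Fin d) → ℝ), ContDiff ℝ 1 θ →
        (∀ z, 0 ≤ θ z ∧ θ z ≤ 1) →
        (∀ z ∈ closedBall (0 : EuclideanSpace ℝ (Fin d)) 1, θ z = 1) →
        (∀ z ∉ ball (0 : EuclideanSpace ℝ (Fin d)) 2, θ z = 0) →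
        (∀ z, ‖fderiv ℝ θ z‖ ≤ 2) →
      ∀ (ρ : EuclideanSpace ℝ (Fin d) → ℝ) (ρmax : ℝ), Measurable ρ →
        (∀ z, 0 ≤ ρ z ∧ ρ z ≤ ρmax) →
      ∀ (f : EuclideanSpace ℝ (Fin d) → ℝ), (∀ z ∈ Ω, DifferentiableAt ℝ f z) →
        f x₁ = y₁ →
        IntegrableOn (fun z => ‖fderiv ℝ f z‖ ^ p) Ω →
        (∀ z ∈ closedBall x₁ (2 * δ),
          |f z - f x₁| ^ p ≤
            K * δ ^ (p - (d : ℝ)) *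
              ∫ w in closedBall x₁ (4 * δ), ‖fderiv ℝ f w‖ ^ p) →
      ∀ (g : EuclideanSpace ℝ (Fin d) → ℝ),
        g = (fun z => (1 - θ (δ⁻¹ • (z - x₁))) * f z + θ (δ⁻¹ • (z - x₁)) * y₁) →
        (∀ z ∈ closedBall x₁ δ, g z = y₁) ∧
        (∀ z ∈ Ω \ ball x₁ (2 * δ), g z = f z) ∧
        |(∫ z in Ω, ‖fderiv ℝ g z‖ ^ p * ρ z ^ 2) -
            ∫ z in Ω, ‖fderiv ℝ f z‖ ^ p * ρ z ^ 2| ≤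
          C * ρmax ^ 2 * ∫ w in closedBall x₁ (4 * δ), ‖fderiv ℝ f w‖ ^ p := by
  have hp : 0 ≤ p := (Nat.cast_nonneg d).trans hpd.le
  refine ⟨2 ^ p * (1 + 2 ^ p * 2 ^ d * K *
    volume.real (closedBall (0 : EuclideanSpace ℝ (Fin d)) 1)) + 1, by positivity, ?_⟩
  intro Ω hΩ x₁ _ y₁ δ hδ hB₄ θ hθ hθ₀₁ hθ₁ hθ₀ hθ₂ ρ ρmax hρ hρb f hf hfx₁ hfp hMorrey g hg
  replace hg : g = cutoffBlend θ δ x₁ f y₁ := hg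
  subst hg hfx₁
  have hθ' := hθ.differentiable one_ne_zero
  have hB₂ : closedBall x₁ (2 * δ) ⊆ Ω := (closedBall_subset_closedBall (by linarith)).trans hB₄
  have hfar : ∀ z ∈ Ω \ ball x₁ (2 * δ), 2 * δ ≤ dist z x₁ := fun z hz =>
    not_lt.1 (mt mem_ball.2 hz.2)
  obtain ⟨hgp, hgE⟩ := setIntegral_norm_fderiv_cutoffBlend_rpow_le hp hδ hθ' hθ₀₁ hθ₂
    (fun z hz => hf z (hB₂ hz)) (hfp.mono_set hB₄) hMorrey
  have hfE : ∫ z in closedBall x₁ (2 * δ), ‖fderiv ℝ f z‖ ^ p ≤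
      ∫ w in closedBall x₁ (4 * δ), ‖fderiv ℝ f w‖ ^ p :=
    setIntegral_mono_set (hfp.mono_set hB₄) (ae_of_all _ fun z => by positivity)
      (closedBall_subset_closedBall (by linarith)).eventuallyLE
  refine ⟨fun z hz => cutoffBlend_eq_of_mem_closedBall hθ₁ hδ hz,
    fun z hz => cutoffBlend_eq_of_le_dist hθ₀ hδ (hfar z hz), ?_⟩
  calc _ ≤ ρmax ^ 2 * ((∫ z in closedBall x₁ (2 * δ),
          ‖fderiv ℝ (cutoffBlend θ δ x₁ f (f x₁)) z‖ ^ p) +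
        ∫ z in closedBall x₁ (2 * δ), ‖fderiv ℝ f z‖ ^ p) :=
      abs_setIntegral_mul_sub_le hΩ.measurableSet measurableSet_closedBall hB₂
        (fun _ => by positivity) (fun _ => by positivity) (hρ.pow_const 2).aestronglyMeasurable
        (fun z => sq_nonneg _) (fun z => pow_le_pow_left₀ (hρb z).1 (hρb z).2 2) hgp hfp
        fun z hz => by
          simp only [fderiv_cutoffBlend_eq_of_le_dist hθ' (fun w => (hθ₀₁ w).1) hθ₀ hδ
            (hf z hz.1) (hfar z ⟨hz.1, fun h => hz.2 (ball_subset_closedBall h)⟩)]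
    _ ≤ _ := (mul_le_mul_of_nonneg_left (add_le_add hgE hfE) (sq_nonneg ρmax)).trans_eq (by ring)

theorem stmt13 (d : ℕ) (hd : 1 ≤ d) (p : ℝ) (hpd : (d : ℝ) < p)
    (K : ℝ) (hK : 0 ≤ K) :
    ∃ C : ℝ, 0 < C ∧
      ∀ (Ω : Set (EuclideanSpace ℝ (Fin d))), IsOpen Ω →
      ∀ (x₁ : EuclideanSpace ℝ (Fin d)), x₁ ∈ Ω →
      ∀ (y₁ : ℝ) (δ : ℝ), 0 < δ → closedBall x₁ (4 * δ) ⊆ Ω →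
      ∀ (θ : EuclideanSpace ℝ (Fin d) → ℝ), ContDiff ℝ 1 θ →
        (∀ z, 0 ≤ θ z ∧ θ z ≤ 1) →
        (∀ z ∈ closedBall (0 : EuclideanSpace ℝ (Fin d)) 1, θ z = 1) →
        (∀ z ∉ ball (0 : EuclideanSpace ℝ (Fin d)) 2, θ z = 0) →
        (∀ z, ‖fderiv ℝ θ z‖ ≤ 2) →
      ∀ (ρ : EuclideanSpace ℝ (Fin d) → ℝ) (ρmax : ℝ), Measurable ρ →
        (∀ z, 0 ≤ ρ z ∧ ρ z ≤ ρmax) →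
      ∀ (f : EuclideanSpace ℝ (Fin d) → ℝ), (∀ z ∈ Ω, DifferentiableAt ℝ f z) →
        f x₁ = y₁ →
        IntegrableOn (fun z => ‖fderiv ℝ f z‖ ^ p) Ω →
        (∀ z ∈ closedBall x₁ (2 * δ),
          |f z - f x₁| ^ p ≤
            K * δ ^ (p - (d : ℝ)) *
              ∫ w in closedBall x₁ (4 * δ), ‖fderiv ℝ f w‖ ^ p) →
      ∀ (g : EuclideanSpace ℝ (Fin d) → ℝ),
        g = (fun z => (1 - θ (δ⁻¹ • (z - x₁))) * f z + θ (δ⁻¹ • (z - x₁)) * y₁) →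
        (∀ z ∈ closedBall x₁ δ, g z = y₁) ∧
        (∀ z ∈ Ω \ ball x₁ (2 * δ), g z = f z) ∧
        |(∫ z in Ω, ‖fderiv ℝ g z‖ ^ p * ρ z ^ 2) -
            ∫ z in Ω, ‖fderiv ℝ f z‖ ^ p * ρ z ^ 2| ≤
          C * ρmax ^ 2 * ∫ w in closedBall x₁ (4 * δ), ‖fderiv ℝ f w‖ ^ p :=
  stmt13_general d p hpd K hK
end
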